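/- arXiv:1105.5105 — 4 statements merged into one kernel-verified Lean document; each statement's English description precedes it below -/
import Mathlib

section
/- Let ω be any fixed environment such that |C_x| = ∞ and |M_x| < ∞ for every x ∈ Z^d. Then the random walk in environment ω is transient ℙ_ω-almost surely, i.e. ℙ_ω-almost surely every site of Z^d is visited only finitely often. -/
open MeasureTheory Filter Set Topology
open scoped Classical ENNReal

noncomputable section

/-- Lattice sites of `ℤ^d`. -/
abbrev Site (d : ℕ) := Fin d → ℤ

/-- The `2d` unit vectors `±e_i` of `ℤ^d`, indexed by `Fin d × Bool`
(`true` for `+e_i`, `false` for `-e_i`). -/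
def stepVec (d : ℕ) (i : Fin d × Bool) : Site d :=
  if i.2 = true then Pi.single i.1 1 else -Pi.single i.1 1

/-- An element of `𝒫`: a probability measure on the set `E` of unit vectors of `ℤ^d`,
recorded via its probability mass function on lattice vectors. -/
structure EnvDist (d : ℕ) where
  prob : Site d → ℝ
  nonneg : ∀ v, 0 ≤ prob v
  support : ∀ v, prob v ≠ 0 → ∃ i, v = stepVec d i
  total : ∑ i : Fin d × Bool, prob (stepVec d i) = 1

instance {d : ℕ} : MeasurableSpace (EnvDist d) :=
  MeasurableSpace.comap EnvDist.prob inferInstance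

/-- Environments: an element of `𝒫` at every site. -/
abbrev EnvOmega (d : ℕ) := Site d → EnvDist d

/-- Path space for the walk. -/
abbrev PathSpace (d : ℕ) := ℕ → Site d

/-- Sample space for the annealed walk: environment together with path. -/
abbrev RWSpace (d : ℕ) := EnvOmega d × PathSpace d

/-- Dot product of a lattice vector with a real vector. -/
def dotR {d : ℕ} (x : Site d) (l : Fin d → ℝ) : ℝ := ∑ i, (x i : ℝ) * l i

/-- Dot product of two lattice vectors. -/
def dotZ {d : ℕ} (x y : Site d) : ℤ := ∑ i, x i * y i

/-- Quenched probability that the walk follows the steps of `x` for its first `n` steps. -/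
def pathWeight {d : ℕ} (ω : EnvOmega d) (n : ℕ) (x : ℕ → Site d) : ℝ :=
  ∏ k ∈ Finset.range n, (ω (x k)).prob (x (k + 1) - x k)

/-- `ν` is the product measure `μ^{⊗ℤ^d}`, i.e. the coordinates are i.i.d. with law `μ`. -/
def IsIIDEnv {d : ℕ} (μ : Measure (EnvDist d)) (ν : Measure (EnvOmega d)) : Prop :=
  IsProbabilityMeasure μ ∧ IsProbabilityMeasure ν ∧
    ∀ (s : Finset (Site d)) (A : Site d → Set (EnvDist d)),
      (∀ x ∈ s, MeasurableSet (A x)) →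
      ν {ω | ∀ x ∈ s, ω x ∈ A x} = ∏ x ∈ s, μ (A x)

/-- `P` is the annealed law of the RWRE started at the origin in an i.i.d. environment
with marginal `μ`: the environment marginal is the i.i.d. product, and the cylinder
probabilities are given by averaging the quenched Markov-chain probabilities. -/
def IsRWRE {d : ℕ} (μ : Measure (EnvDist d)) (P : Measure (RWSpace d)) : Prop :=
  IsProbabilityMeasure P ∧ IsIIDEnv μ (P.map Prod.fst) ∧
    ∀ (n : ℕ) (x : ℕ → Site d) (A : Set (EnvOmega d)), MeasurableSet A →
      (P {q | q.1 ∈ A ∧ ∀ k ≤ n, q.2 k = x k}).toReal =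
        (if x 0 = 0 then (1 : ℝ) else 0) * ∫ ω in A, pathWeight ω n x ∂(P.map Prod.fst)

/-- `Q` is the quenched law `ℙ_ω` of the walk in the fixed environment `ω`, started at the
origin. -/
def IsQuenchedRW {d : ℕ} (ω : EnvOmega d) (Q : Measure (PathSpace d)) : Prop :=
  IsProbabilityMeasure Q ∧
    ∀ (n : ℕ) (x : ℕ → Site d),
      (Q {w | ∀ k ≤ n, w k = x k}).toReal =
        (if x 0 = 0 then (1 : ℝ) else 0) * pathWeight ω n x

/-- `x → y`: there is a directed path from `x` to `y` in the graph `G(ω)`. -/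
def Reaches {d : ℕ} (ω : EnvOmega d) : Site d → Site d → Prop :=
  Relation.ReflTransGen (fun a b => 0 < (ω a).prob (b - a))

/-- The forward cluster `C_x`. -/
def clusterC {d : ℕ} (ω : EnvOmega d) (x : Site d) : Set (Site d) := {y | Reaches ω x y}

/-- The mutually connected cluster `M_x = C_x ∩ B_x`. -/
def clusterM {d : ℕ} (ω : EnvOmega d) (x : Site d) : Set (Site d) :=
  {y | Reaches ω x y ∧ Reaches ω y x}

/-- The local drift `u = ∑_e γ(e) e` of an environment value `γ`. -/
def drift {d : ℕ} (γ : EnvDist d) : Fin d → ℝ :=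
  fun i => ∑ k : Fin d × Bool, γ.prob (stepVec d k) * ((stepVec d k i : ℤ) : ℝ)

/-- `N_n`: the number of times before time `n` at which the walk sits on a site whose
environment equals `γ`. -/
def envCount {d : ℕ} (γ : EnvDist d) (q : RWSpace d) (n : ℕ) : ℕ :=
  Set.ncard {m : ℕ | m < n ∧ q.1 (q.2 m) = γ}

end

/-!
Let `hitProb ω x T y` be the probability of reaching `x` from `y` within `T` steps. Since `C_x`
is infinite and `M_x` finite, some `y` with `x → y` cannot reach `x` back, and a path of positive
weight `ε` from `x` to `y` that does not return to `x` shows that the probability of returning to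
`x` within any finite time is at most `θ = 1 - ε < 1`. The Markov property, applied one step at a
time on cylinder sets, bounds the probability of `m + 1` visits to `x` before time `T` by `θ ^ m`,
uniformly in `T`. Hence each site is visited infinitely often with probability zero, and there
are only countably many sites.
-/

lemma sum_mul_le_one_sub {ι : Type*} [Fintype ι] {p f : ι → ℝ} (hp : ∀ i, 0 ≤ p i)
    (hp1 : ∑ i, p i = 1) (hf : ∀ i, f i ≤ 1) (j : ι) :
    ∑ i, p i * f i ≤ 1 - p j * (1 - f j) := by
  have hj : p j * (1 - f j) ≤ ∑ i, p i * (1 - f i) :=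
    Finset.single_le_sum (fun i _ => mul_nonneg (hp i) (sub_nonneg.2 (hf i))) (Finset.mem_univ j)
  simp only [mul_sub, mul_one, Finset.sum_sub_distrib, hp1] at hj
  linarith

lemma EnvDist.prob_le_one {d : ℕ} (γ : EnvDist d) (v : Site d) : γ.prob v ≤ 1 := by
  by_cases hv : γ.prob v = 0
  · rw [hv]; exact zero_le_one
  obtain ⟨i, rfl⟩ := γ.support v hv
  rw [← γ.total]
  exact Finset.single_le_sum (fun j _ => γ.nonneg (stepVec d j)) (Finset.mem_univ i)

namespace QuenchedRW

variable {d : ℕ}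

lemma pathWeight_nonneg (ω : EnvOmega d) (n : ℕ) (c : ℕ → Site d) :
    0 ≤ pathWeight ω n c :=
  Finset.prod_nonneg fun _ _ => (ω _).nonneg _

lemma pathWeight_le_one (ω : EnvOmega d) (n : ℕ) (c : ℕ → Site d) :
    pathWeight ω n c ≤ 1 :=
  Finset.prod_le_one (fun _ _ => (ω _).nonneg _) fun _ _ => (ω _).prob_le_one _

lemma pathWeight_succ' (ω : EnvOmega d) (n : ℕ) (c : ℕ → Site d) :
    pathWeight ω (n + 1) c =
      (ω (c 0)).prob (c 1 - c 0) * pathWeight ω n (fun k => c (k + 1)) := by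
  rw [pathWeight, Finset.prod_range_succ', mul_comm]
  rfl

lemma pathWeight_update_succ (ω : EnvOmega d) (n : ℕ) (c : ℕ → Site d) (z : Site d) :
    pathWeight ω (n + 1) (Function.update c (n + 1) z) =
      pathWeight ω n c * (ω (c n)).prob (z - c n) := by
  have hc : ∀ k ≤ n, Function.update c (n + 1) z k = c k := fun k hk =>
    Function.update_of_ne (by omega) _ _
  rw [pathWeight, Finset.prod_range_succ, Function.update_self, hc n le_rfl]
  congr 1
  refine Finset.prod_congr rfl fun k hk => ?_
  have hk := Finset.mem_range.1 hk
  rw [hc k hk.le, hc (k + 1) hk]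

def transitionOp (ω : EnvOmega d) (f : Site d → ℝ) (y : Site d) : ℝ :=
  ∑ a, (ω y).prob (stepVec d a) * f (y + stepVec d a)

lemma transitionOp_nonneg (ω : EnvOmega d) {f : Site d → ℝ} (hf : ∀ z, 0 ≤ f z)
    (y : Site d) : 0 ≤ transitionOp ω f y :=
  Finset.sum_nonneg fun _ _ => mul_nonneg ((ω y).nonneg _) (hf _)

lemma transitionOp_le_one (ω : EnvOmega d) {f : Site d → ℝ} (hf : ∀ z, f z ≤ 1)
    (y : Site d) : transitionOp ω f y ≤ 1 := by
  rw [← (ω y).total]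
  exact Finset.sum_le_sum fun a _ => mul_le_of_le_one_right ((ω y).nonneg _) (hf _)

lemma transitionOp_mul_const (ω : EnvOmega d) (f : Site d → ℝ) (r : ℝ) (y : Site d) :
    transitionOp ω (fun z => f z * r) y = transitionOp ω f y * r := by
  simp only [transitionOp, Finset.sum_mul, mul_assoc]

lemma transitionOp_le_one_sub (ω : EnvOmega d) {f : Site d → ℝ} (hf : ∀ z, f z ≤ 1)
    (y z : Site d) : transitionOp ω f y ≤ 1 - (ω y).prob (z - y) * (1 - f z) := by
  by_cases hz : (ω y).prob (z - y) = 0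
  · simpa [hz] using transitionOp_le_one ω hf y
  obtain ⟨a, ha⟩ := (ω y).support _ hz
  obtain rfl : z = y + stepVec d a := by rw [← ha]; abel
  rw [ha]
  exact sum_mul_le_one_sub (fun _ => (ω y).nonneg _) (ω y).total (fun _ => hf _) a

lemma tsum_ofReal_prob_mul_le (ω : EnvOmega d) {β : Site d → ℝ} (hβ : ∀ z, 0 ≤ β z)
    (y : Site d) :
    ∑' z, ENNReal.ofReal ((ω y).prob (z - y) * β z) ≤
      ENNReal.ofReal (transitionOp ω β y) := by
  rw [tsum_eq_sum (s := Finset.univ.image fun a => y + stepVec d a)]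
  · calc ∑ z ∈ Finset.univ.image (fun a => y + stepVec d a),
          ENNReal.ofReal ((ω y).prob (z - y) * β z)
        ≤ ∑ a, ENNReal.ofReal ((ω y).prob (y + stepVec d a - y) * β (y + stepVec d a)) :=
          Finset.sum_image_le_of_nonneg fun _ _ => zero_le
      _ = ENNReal.ofReal (transitionOp ω β y) := by
          rw [transitionOp, ENNReal.ofReal_sum_of_nonneg fun a _ =>
            mul_nonneg ((ω y).nonneg _) (hβ _)]
          simp only [add_sub_cancel_left]
  · intro z hz
    have hzero : (ω y).prob (z - y) = 0 := by
      by_contra hne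
      obtain ⟨a, ha⟩ := (ω y).support _ hne
      exact hz (Finset.mem_image.2 ⟨a, Finset.mem_univ _, by rw [← ha]; abel⟩)
    rw [hzero, zero_mul, ENNReal.ofReal_zero]

/-- The probability that the walk started at `y` visits `x` within `T` steps. -/
def hitProb (ω : EnvOmega d) (x : Site d) : ℕ → Site d → ℝ
  | 0, y => if y = x then 1 else 0
  | T + 1, y => if y = x then 1 else transitionOp ω (hitProb ω x T) y

variable {ω : EnvOmega d} {x : Site d}

@[simp]
lemma hitProb_self (T : ℕ) : hitProb ω x T x = 1 := by
  cases T <;> simp [hitProb]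

lemma hitProb_zero_of_ne {y : Site d} (hy : y ≠ x) : hitProb ω x 0 y = 0 := by
  simp [hitProb, hy]

lemma hitProb_succ_of_ne {y : Site d} (hy : y ≠ x) (T : ℕ) :
    hitProb ω x (T + 1) y = transitionOp ω (hitProb ω x T) y := by
  simp [hitProb, hy]

lemma hitProb_mem_Icc (T : ℕ) (y : Site d) : hitProb ω x T y ∈ Icc 0 1 := by
  induction T generalizing y with
  | zero => unfold hitProb; split_ifs <;> simp
  | succ T ih =>
    unfold hitProb
    split_ifs
    · simp
    · exact ⟨transitionOp_nonneg ω (fun z => (ih z).1) y,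
        transitionOp_le_one ω (fun z => (ih z).2) y⟩

lemma hitProb_nonneg (T : ℕ) (y : Site d) : 0 ≤ hitProb ω x T y := (hitProb_mem_Icc T y).1

lemma hitProb_le_one (T : ℕ) (y : Site d) : hitProb ω x T y ≤ 1 := (hitProb_mem_Icc T y).2

lemma reaches_step {y z : Site d} (h : (ω y).prob (z - y) ≠ 0) : Reaches ω y z :=
  Relation.ReflTransGen.single (lt_of_le_of_ne ((ω y).nonneg _) (Ne.symm h))

lemma ne_of_not_reaches {y : Site d} (hy : ¬Reaches ω y x) : y ≠ x := by
  rintro rfl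
  exact hy Relation.ReflTransGen.refl

lemma hitProb_eq_zero_of_not_reaches {y : Site d} (hy : ¬Reaches ω y x) (T : ℕ) :
    hitProb ω x T y = 0 := by
  induction T generalizing y with
  | zero => exact hitProb_zero_of_ne (ne_of_not_reaches hy)
  | succ T ih =>
    rw [hitProb_succ_of_ne (ne_of_not_reaches hy)]
    refine Finset.sum_eq_zero fun a _ => ?_
    by_cases ha : (ω y).prob (stepVec d a) = 0
    · rw [ha, zero_mul]
    · have hstep : Reaches ω y (y + stepVec d a) :=
        reaches_step (by rwa [add_sub_cancel_left])
      rw [ih fun h => hy (hstep.trans h), mul_zero]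

lemma pathWeight_le_one_sub_hitProb {n : ℕ} {c : ℕ → Site d} (hcx : ∀ k ≤ n, c k ≠ x)
    (hend : ¬Reaches ω (c n) x) (T : ℕ) : pathWeight ω n c ≤ 1 - hitProb ω x T (c 0) := by
  induction n generalizing c T with
  | zero => simp [pathWeight, hitProb_eq_zero_of_not_reaches hend]
  | succ n ih =>
    cases T with
    | zero =>
      simpa [hitProb_zero_of_ne (hcx 0 (Nat.zero_le _))] using pathWeight_le_one ω _ c
    | succ T =>
      have htail := ih (c := fun k => c (k + 1)) (fun k hk => hcx (k + 1) (by omega)) hend T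
      rw [zero_add] at htail
      rw [hitProb_succ_of_ne (hcx 0 (Nat.zero_le _)), pathWeight_succ']
      have hstep := transitionOp_le_one_sub ω (hitProb_le_one (ω := ω) (x := x) T) (c 0) (c 1)
      nlinarith [(ω (c 0)).nonneg (c 1 - c 0)]

lemma exists_first_step_of_reaches {y : Site d} (h : Reaches ω x y) :
    y = x ∨ ∃ z, 0 < (ω x).prob (z - x) ∧ ∃ (n : ℕ) (c : ℕ → Site d),
      c 0 = z ∧ c n = y ∧ (∀ k ≤ n, c k ≠ x) ∧ 0 < pathWeight ω n c := by
  induction h with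
  | refl => exact Or.inl rfl
  | @tail w y _ hwy ih =>
    by_cases hyx : y = x
    · exact Or.inl hyx
    right
    rcases ih with rfl | ⟨z, hz, n, c, hc0, hcn, hcx, hpos⟩
    · exact ⟨y, hwy, 0, fun _ => y, rfl, rfl, fun _ _ => hyx, by simp [pathWeight]⟩
    refine ⟨z, hz, n + 1, Function.update c (n + 1) y, ?_, Function.update_self .., ?_, ?_⟩
    · rw [Function.update_of_ne (by omega), hc0]
    · intro k hk
      rcases eq_or_ne k (n + 1) with rfl | hne
      · rwa [Function.update_self]
      · rw [Function.update_of_ne hne]; exact hcx k (by omega)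
    · rw [pathWeight_update_succ, hcn]
      exact mul_pos hpos hwy

lemma exists_transitionOp_hitProb_le (hC : (clusterC ω x).Infinite)
    (hM : (clusterM ω x).Finite) :
    ∃ θ : ℝ, 0 ≤ θ ∧ θ < 1 ∧ ∀ T, transitionOp ω (hitProb ω x T) x ≤ θ := by
  obtain ⟨y, hxy, hyx⟩ := (hC.sdiff hM).nonempty
  have hyx : ¬Reaches ω y x := fun h => hyx ⟨hxy, h⟩
  obtain rfl | ⟨z, hz, n, c, rfl, rfl, hcx, hpos⟩ := exists_first_step_of_reaches hxy
  · exact absurd rfl (ne_of_not_reaches hyx)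
  refine ⟨1 - (ω x).prob (c 0 - x) * pathWeight ω n c, ?_, by nlinarith, fun T => ?_⟩
  · nlinarith [(ω x).prob_le_one (c 0 - x), pathWeight_le_one ω n c]
  · have hesc := pathWeight_le_one_sub_hitProb hcx hyx T
    have hstep := transitionOp_le_one_sub ω (hitProb_le_one (ω := ω) (x := x) T) x (c 0)
    nlinarith

/-- The number of visits to `x` during the time window `[n, n + T]`. -/
def visits (x : Site d) (w : PathSpace d) (n T : ℕ) : ℕ :=
  ∑ k ∈ Finset.range (T + 1), if w (n + k) = x then 1 else 0

lemma visits_zero (w : PathSpace d) (n : ℕ) : visits x w n 0 = if w n = x then 1 else 0 := by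
  rw [visits, Finset.sum_range_one, add_zero]

lemma visits_succ (w : PathSpace d) (n T : ℕ) :
    visits x w n (T + 1) = (if w n = x then 1 else 0) + visits x w (n + 1) T := by
  rw [visits, Finset.sum_range_succ', add_comm, visits]
  simp only [add_zero, add_assoc, add_comm 1]

lemma visits_mono (w : PathSpace d) (n : ℕ) : Monotone (visits x w n) := fun _ _ h =>
  Finset.sum_le_sum_of_subset (Finset.range_subset_range.2 (by omega))

lemma exists_le_visits {w : PathSpace d} (hw : {k | w k = x}.Infinite) (m : ℕ) :
    ∃ T, m ≤ visits x w 0 T := by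
  obtain ⟨s, hs, rfl⟩ := hw.exists_subset_card_eq m
  refine ⟨s.sup id, ?_⟩
  calc s.card = ∑ k ∈ s, if w (0 + k) = x then 1 else 0 := by
        rw [Finset.card_eq_sum_ones]
        exact Finset.sum_congr rfl fun k hk => by
          rw [zero_add, if_pos (show w k = x from hs hk)]
    _ ≤ visits x w 0 (s.sup id) :=
        Finset.sum_le_sum_of_subset fun k hk =>
          Finset.mem_range.2 (Nat.lt_succ_of_le (Finset.le_sup (f := id) hk))

def pathCylinder (n : ℕ) (c : ℕ → Site d) : Set (PathSpace d) := {w | ∀ k ≤ n, w k = c k}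

variable {Q : Measure (PathSpace d)}

lemma measure_pathCylinder (hQ : IsQuenchedRW ω Q) (n : ℕ) (c : ℕ → Site d) :
    Q (pathCylinder n c) =
      ENNReal.ofReal ((if c 0 = 0 then 1 else 0) * pathWeight ω n c) := by
  have := hQ.1
  rw [← hQ.2 n c, ENNReal.ofReal_toReal (measure_ne_top Q _)]
  rfl

lemma tsum_measure_pathCylinder_zero (hQ : IsQuenchedRW ω Q) :
    ∑' z, Q (pathCylinder 0 fun _ => z) = 1 := by
  simp only [measure_pathCylinder hQ, pathWeight, Finset.range_zero, Finset.prod_empty, mul_one]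
  rw [tsum_eq_single 0 fun z hz => by simp [hz]]
  simp

lemma measure_pathCylinder_update (hQ : IsQuenchedRW ω Q) (n : ℕ) (c : ℕ → Site d)
    (z : Site d) :
    Q (pathCylinder (n + 1) (Function.update c (n + 1) z)) =
      Q (pathCylinder n c) * ENNReal.ofReal ((ω (c n)).prob (z - c n)) := by
  rw [measure_pathCylinder hQ, measure_pathCylinder hQ, pathWeight_update_succ,
    Function.update_of_ne (by omega), ← ENNReal.ofReal_mul, mul_assoc]
  split_ifs <;> simp [pathWeight_nonneg]

/-- The Markov property at the level of cylinders: a bound `β` on the conditional probability of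
`F` after one more step turns into the bound `P β` before it. -/
lemma measure_pathCylinder_inter_le (hQ : IsQuenchedRW ω Q) {n : ℕ} {c : ℕ → Site d}
    {F : Set (PathSpace d)} {β : Site d → ℝ} (hβ : ∀ z, 0 ≤ β z)
    (h : ∀ z, Q (pathCylinder (n + 1) (Function.update c (n + 1) z) ∩ F) ≤
      Q (pathCylinder (n + 1) (Function.update c (n + 1) z)) * ENNReal.ofReal (β z)) :
    Q (pathCylinder n c ∩ F) ≤
      Q (pathCylinder n c) * ENNReal.ofReal (transitionOp ω β (c n)) := by
  have hcover : pathCylinder n c ∩ F ⊆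
      ⋃ z, pathCylinder (n + 1) (Function.update c (n + 1) z) ∩ F := by
    rintro w ⟨hw, hF⟩
    refine mem_iUnion.2 ⟨w (n + 1), fun k hk => ?_, hF⟩
    rcases eq_or_ne k (n + 1) with rfl | hne
    · rw [Function.update_self]
    · rw [Function.update_of_ne hne]; exact hw k (by omega)
  calc Q (pathCylinder n c ∩ F)
      ≤ ∑' z, Q (pathCylinder (n + 1) (Function.update c (n + 1) z) ∩ F) :=
        (measure_mono hcover).trans (measure_iUnion_le _)
    _ ≤ ∑' z, Q (pathCylinder n c) * ENNReal.ofReal ((ω (c n)).prob (z - c n) * β z) :=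
        ENNReal.tsum_le_tsum fun z => (h z).trans_eq <| by
          rw [measure_pathCylinder_update hQ, mul_assoc, ENNReal.ofReal_mul ((ω _).nonneg _)]
    _ ≤ Q (pathCylinder n c) * ENNReal.ofReal (transitionOp ω β (c n)) := by
        rw [ENNReal.tsum_mul_left]
        gcongr
        exact tsum_ofReal_prob_mul_le ω hβ (c n)

lemma pathCylinder_inter_visits_zero {n : ℕ} {c : ℕ → Site d} {m : ℕ}
    (h : ¬(c n = x ∧ m = 0)) : pathCylinder n c ∩ {w | m + 1 ≤ visits x w n 0} = ∅ := by
  refine eq_empty_of_forall_notMem fun w ⟨hw, hv⟩ => h ?_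
  rw [mem_ofPred_eq, visits_zero, hw n le_rfl] at hv
  split_ifs at hv with hcn
  exacts [⟨hcn, by omega⟩, by omega]

lemma pathCylinder_inter_visits_succ_subset (n : ℕ) (c : ℕ → Site d) (T k : ℕ) :
    pathCylinder n c ∩ {w | k + (if c n = x then 1 else 0) ≤ visits x w n (T + 1)} ⊆
      pathCylinder n c ∩ {w | k ≤ visits x w (n + 1) T} := by
  rintro w ⟨hw, hk⟩
  refine ⟨hw, ?_⟩
  rw [mem_ofPred_eq, visits_succ, hw n le_rfl] at hk
  exact (by omega : k ≤ visits x w (n + 1) T)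

section ReturnBound

variable (hQ : IsQuenchedRW ω Q) {θ : ℝ} (hθ0 : 0 ≤ θ)
  (hθ : ∀ T, transitionOp ω (hitProb ω x T) x ≤ θ)
include hQ hθ0 hθ

/-- Each visit to `x` after the first costs a factor `θ`, which bounds the return probability;
`hitProb` accounts for reaching `x` in the first place. -/
lemma measure_pathCylinder_inter_visits_le (T : ℕ) :
    ∀ (n : ℕ) (c : ℕ → Site d) (m : ℕ),
      Q (pathCylinder n c ∩ {w | m + 1 ≤ visits x w n T}) ≤
        Q (pathCylinder n c) * ENNReal.ofReal (hitProb ω x T (c n) * θ ^ m) := by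
  intro n c m
  by_cases hcm : c n = x ∧ m = 0
  · simpa [hcm.1, hcm.2] using measure_mono inter_subset_left
  induction T generalizing n c m with
  | zero =>
    rw [pathCylinder_inter_visits_zero hcm, measure_empty]
    exact zero_le
  | succ T ih =>
    have hstep : ∀ k, Q (pathCylinder n c ∩ {w | k + 1 ≤ visits x w (n + 1) T}) ≤
        Q (pathCylinder n c) *
          ENNReal.ofReal (transitionOp ω (hitProb ω x T) (c n) * θ ^ k) := fun k => by
      rw [← transitionOp_mul_const]
      refine measure_pathCylinder_inter_le hQ
        (fun z => mul_nonneg (hitProb_nonneg T z) (pow_nonneg hθ0 k)) fun z => ?_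
      by_cases hz : z = x ∧ k = 0
      · simpa [hz.1, hz.2] using measure_mono inter_subset_left
      simpa using ih (n + 1) (Function.update c (n + 1) z) k (by simpa using hz)
    by_cases hcn : c n = x
    · obtain ⟨m, rfl⟩ := Nat.exists_eq_succ_of_ne_zero fun hm => hcm ⟨hcn, hm⟩
      calc Q (pathCylinder n c ∩ {w | m + 1 + 1 ≤ visits x w n (T + 1)})
          ≤ Q (pathCylinder n c ∩ {w | m + 1 ≤ visits x w (n + 1) T}) :=
            measure_mono <| by
              simpa [hcn] using pathCylinder_inter_visits_succ_subset (x := x) n c T (m + 1)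
        _ ≤ Q (pathCylinder n c) *
              ENNReal.ofReal (transitionOp ω (hitProb ω x T) (c n) * θ ^ m) := hstep m
        _ ≤ Q (pathCylinder n c) *
              ENNReal.ofReal (hitProb ω x (T + 1) (c n) * θ ^ (m + 1)) := by
            rw [hcn, hitProb_self, one_mul, pow_succ']
            gcongr
            exact hθ T
    · calc Q (pathCylinder n c ∩ {w | m + 1 ≤ visits x w n (T + 1)})
          ≤ Q (pathCylinder n c ∩ {w | m + 1 ≤ visits x w (n + 1) T}) :=
            measure_mono <| by
              simpa [hcn] using pathCylinder_inter_visits_succ_subset (x := x) n c T (m + 1)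
        _ ≤ _ := by rw [hitProb_succ_of_ne hcn]; exact hstep m

lemma measure_succ_le_visits_le (T m : ℕ) :
    Q {w | m + 1 ≤ visits x w 0 T} ≤ ENNReal.ofReal (θ ^ m) := by
  have hcover : {w | m + 1 ≤ visits x w 0 T} ⊆
      ⋃ z, pathCylinder 0 (fun _ => z) ∩ {w | m + 1 ≤ visits x w 0 T} := fun w hw =>
    mem_iUnion.2 ⟨w 0, fun k hk => by rw [Nat.le_zero.1 hk], hw⟩
  calc Q {w | m + 1 ≤ visits x w 0 T}
      ≤ ∑' z, Q (pathCylinder 0 (fun _ => z) ∩ {w | m + 1 ≤ visits x w 0 T}) :=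
        (measure_mono hcover).trans (measure_iUnion_le _)
    _ ≤ ∑' z, Q (pathCylinder 0 fun _ => z) * ENNReal.ofReal (θ ^ m) :=
        ENNReal.tsum_le_tsum fun z =>
          (measure_pathCylinder_inter_visits_le hQ hθ0 hθ T 0 _ m).trans <| by
            gcongr
            exact mul_le_of_le_one_left (pow_nonneg hθ0 m) (hitProb_le_one T z)
    _ = ENNReal.ofReal (θ ^ m) := by
        rw [ENNReal.tsum_mul_right, tsum_measure_pathCylinder_zero hQ, one_mul]

end ReturnBound

lemma measure_infinite_visits_eq_zero (hQ : IsQuenchedRW ω Q) (hC : (clusterC ω x).Infinite)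
    (hM : (clusterM ω x).Finite) : Q {w | {n | w n = x}.Infinite} = 0 := by
  obtain ⟨θ, hθ0, hθ1, hθ⟩ := exists_transitionOp_hitProb_le hC hM
  have hle : ∀ m, Q {w | {n | w n = x}.Infinite} ≤ ENNReal.ofReal θ ^ m := fun m =>
    calc Q {w | {n | w n = x}.Infinite}
        ≤ Q (⋃ T, {w | m + 1 ≤ visits x w 0 T}) :=
          measure_mono fun w hw => mem_iUnion.2 (exists_le_visits hw (m + 1))
      _ = ⨆ T, Q {w | m + 1 ≤ visits x w 0 T} :=
          Monotone.measure_iUnion fun _ _ h w hw => le_trans hw (visits_mono w 0 h)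
      _ ≤ ENNReal.ofReal θ ^ m := by
          rw [← ENNReal.ofReal_pow hθ0]
          exact iSup_le (measure_succ_le_visits_le hQ hθ0 hθ · m)
  exact le_antisymm (ge_of_tendsto' (ENNReal.tendsto_pow_atTop_nhds_zero_of_lt_one
    (ENNReal.ofReal_lt_one.2 hθ1)) hle) bot_le

end QuenchedRW

theorem stmt6_general {d : ℕ} (ω : EnvOmega d)
    (hC : ∀ x : Site d, (clusterC ω x).Infinite)
    (hM : ∀ x : Site d, (clusterM ω x).Finite)
    (Q : Measure (PathSpace d)) (hQ : IsQuenchedRW ω Q) :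
    Q {w : PathSpace d | ∀ x : Site d, {n : ℕ | w n = x}.Finite} = 1 := by
  have : IsProbabilityMeasure Q := hQ.1
  have hnull : Q (⋃ x, {w : PathSpace d | {n : ℕ | w n = x}.Infinite}) = 0 :=
    measure_iUnion_null fun x => QuenchedRW.measure_infinite_visits_eq_zero hQ (hC x) (hM x)
  rw [← measure_univ (μ := Q)]
  refine measure_congr (ae_eq_univ.2 (measure_mono_null (fun w hw => ?_) hnull))
  simpa [Set.not_infinite] using hw

/-- for a fixed environment `ω` with `|C_x| = ∞` and `|M_x| < ∞` for every
`x`, the walk in environment `ω` is transient `ℙ_ω`-a.s. (every site is visited only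
finitely often). -/
theorem stmt6 {d : ℕ} (hd : 2 ≤ d) (ω : EnvOmega d)
    (hC : ∀ x : Site d, (clusterC ω x).Infinite)
    (hM : ∀ x : Site d, (clusterM ω x).Finite)
    (Q : Measure (PathSpace d)) (hQ : IsQuenchedRW ω Q) :
    Q {w : PathSpace d | ∀ x : Site d, {n : ℕ | w n = x}.Finite} = 1 :=
  stmt6_general ω hC hM Q hQ
end

section
/- Let ω be any fixed environment such that |C_y| = ∞ for every y ∈ Z^d and such that there is a unique infinite mutually connected cluster M_∞ (i.e. a unique infinite set among the M_x, x ∈ Z^d). Then ℙ_ω-almost surely the recurrent set {x ∈ Z^d : X_n = x for infinitely many n} is either empty or equal to M_∞. -/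
open MeasureTheory Filter Set Topology
open scoped Classical ENNReal

/-!
Almost surely the walk only uses edges of `G(ω)`, so every site it visits after time `s` lies in
`C_{X_s}`. Suppose `x` is visited infinitely often and `x → y` along a path `z` of positive weight
`p`. By the Markov property at successive visits to `x` spaced at least `|z|` steps apart, each such
visit independently gives probability `p` of following `z` to `y`; hence avoiding `y` forever has
probability at most `(1 - p) ^ k` for every `k`, and `y` too is a.s. visited infinitely often.
So if the recurrent set contains some `x`, it is all of `C_x`, and since `x` is visited again after
every `y ∈ C_x`, `C_x = M_x`. This cluster is infinite, hence it is `M_∞`.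
-/

namespace RWRE

variable {d : ℕ}

section Cylinders

def cylinderUpTo (n : ℕ) (v : PathSpace d) : Set (PathSpace d) := {w | ∀ t ≤ n, w t = v t}

def prefixUpTo (n : ℕ) (w : PathSpace d) : Fin (n + 1) → Site d := fun t => w t

lemma measurable_prefixUpTo (n : ℕ) : Measurable (prefixUpTo (d := d) n) :=
  measurable_pi_lambda _ fun _ => measurable_pi_apply _

lemma cylinderUpTo_eq_preimage (n : ℕ) (v : PathSpace d) :
    cylinderUpTo n v = prefixUpTo n ⁻¹' {prefixUpTo n v} := by
  ext w
  simp [cylinderUpTo, prefixUpTo, funext_iff, Fin.forall_iff]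

lemma measurableSet_cylinderUpTo (n : ℕ) (v : PathSpace d) :
    MeasurableSet (cylinderUpTo n v) := by
  rw [cylinderUpTo_eq_preimage]
  exact measurable_prefixUpTo n (measurableSet_singleton _)

def IsDeterminedUpTo (n : ℕ) (S : Set (PathSpace d)) : Prop :=
  ∀ w ∈ S, cylinderUpTo n w ⊆ S

variable {n : ℕ} {S : Set (PathSpace d)}

lemma IsDeterminedUpTo.eq_preimage (hS : IsDeterminedUpTo n S) :
    S = prefixUpTo n ⁻¹' (prefixUpTo n '' S) := by
  refine (subset_preimage_image _ _).antisymm ?_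
  rintro w' ⟨w, hw, hww'⟩
  exact hS w hw (by rw [cylinderUpTo_eq_preimage]; exact hww'.symm)

lemma IsDeterminedUpTo.measurableSet (hS : IsDeterminedUpTo n S) : MeasurableSet S := by
  rw [hS.eq_preimage]
  exact measurable_prefixUpTo n (to_countable _).measurableSet

lemma IsDeterminedUpTo.measure_inter_le {Q : Measure (PathSpace d)} (hS : IsDeterminedUpTo n S)
    {A : Set (PathSpace d)} {c : ℝ≥0∞}
    (hA : ∀ w ∈ S, Q (cylinderUpTo n w ∩ A) ≤ c * Q (cylinderUpTo n w)) :
    Q (S ∩ A) ≤ c * Q S := by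
  set fiber : (Fin (n + 1) → Site d) → Set (PathSpace d) := fun u => prefixUpTo n ⁻¹' {u}
  have hfiber : ∀ u, MeasurableSet (fiber u) :=
    fun u => measurable_prefixUpTo n (measurableSet_singleton u)
  have hS_eq : S = ⋃ u, fiber u ∩ S := by
    rw [← iUnion_inter, ← preimage_iUnion, iUnion_of_singleton, preimage_univ, univ_inter]
  have hpiece : ∀ u, Q (fiber u ∩ (S ∩ A)) ≤ c * Q (fiber u ∩ S) := by
    intro u
    by_cases hu : ∃ w ∈ S, prefixUpTo n w = u
    · obtain ⟨w, hw, rfl⟩ := hu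
      have hcyl : fiber (prefixUpTo n w) = cylinderUpTo n w := (cylinderUpTo_eq_preimage n w).symm
      rw [hcyl, inter_eq_left.2 (hS w hw), ← inter_assoc, inter_eq_left.2 (hS w hw)]
      exact hA w hw
    · have hempty : fiber u ∩ S = ∅ :=
        eq_empty_of_forall_notMem fun w ⟨hwu, hw⟩ => hu ⟨w, hw, hwu⟩
      rw [← inter_assoc, hempty, empty_inter, measure_empty]
      exact zero_le
  calc Q (S ∩ A) ≤ ∑' u, Q (fiber u ∩ (S ∩ A)) := by
        conv_lhs => rw [hS_eq, iUnion_inter]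
        simp only [inter_assoc]
        exact measure_iUnion_le _
    _ ≤ ∑' u, c * Q (fiber u ∩ S) := ENNReal.tsum_le_tsum hpiece
    _ = c * Q S := by
        rw [ENNReal.tsum_mul_left, ← measure_iUnion, ← hS_eq]
        · exact (pairwise_disjoint_fiber _).mono fun _ _ h =>
            h.mono inter_subset_left inter_subset_left
        · exact fun u => (hfiber u).inter hS.measurableSet

end Cylinders

section PathWeight

variable {ω : EnvOmega d} {Q : Measure (PathSpace d)} {n L : ℕ} {v z : PathSpace d}

lemma pathWeight_congr (h : ∀ t ≤ n, v t = z t) : pathWeight ω n v = pathWeight ω n z :=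
  Finset.prod_congr rfl fun k hk => by
    rw [h k (by simp at hk; omega), h (k + 1) (by simp at hk; omega)]

lemma measure_cylinderUpTo (hQ : IsQuenchedRW ω Q) (n : ℕ) (v : PathSpace d) :
    Q (cylinderUpTo n v) = ENNReal.ofReal ((if v 0 = 0 then 1 else 0) * pathWeight ω n v) := by
  have := hQ.1
  rw [← hQ.2 n v, ENNReal.ofReal_toReal (measure_ne_top Q _)]
  rfl

def splice (n : ℕ) (v z : PathSpace d) : PathSpace d :=
  fun t => if t ≤ n then v t else z (t - n)

lemma splice_add (hvz : v n = z 0) (k : ℕ) : splice n v z (n + k) = z k := by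
  rcases k.eq_zero_or_pos with rfl | hk
  · simpa [splice] using hvz
  · simp [splice, hk.ne']

lemma pathWeight_splice (hvz : v n = z 0) :
    pathWeight ω (n + L) (splice n v z) = pathWeight ω n v * pathWeight ω L z := by
  unfold pathWeight
  rw [Finset.prod_range_add]
  congr 1
  · refine Finset.prod_congr rfl fun k hk => ?_
    have hk : k + 1 ≤ n := Finset.mem_range.1 hk
    simp [splice, hk, (Nat.le_succ k).trans hk]
  · refine Finset.prod_congr rfl fun k _ => ?_
    rw [splice_add hvz, add_assoc, splice_add hvz]

def followsFrom (n L : ℕ) (z : PathSpace d) : Set (PathSpace d) :=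
  {w | ∀ k ≤ L, w (n + k) = z k}

lemma cylinderUpTo_inter_followsFrom (hvz : v n = z 0) :
    cylinderUpTo n v ∩ followsFrom n L z = cylinderUpTo (n + L) (splice n v z) := by
  ext w
  constructor
  · rintro ⟨hv, hz⟩ t ht
    by_cases htn : t ≤ n
    · simp [splice, htn, hv t htn]
    · obtain ⟨k, rfl⟩ := Nat.exists_eq_add_of_le (not_le.1 htn).le
      rw [splice_add hvz, hz k (by omega)]
  · intro h
    refine ⟨fun t ht => ?_, fun k hk => ?_⟩
    · simp [h t (by omega), splice, ht]
    · rw [h (n + k) (by omega), splice_add hvz]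

lemma measure_cylinderUpTo_diff_followsFrom (hQ : IsQuenchedRW ω Q) (hvz : v n = z 0) :
    Q (cylinderUpTo n v \ followsFrom n L z) =
      (1 - ENNReal.ofReal (pathWeight ω L z)) * Q (cylinderUpTo n v) := by
  have := hQ.1
  have hfollow : Q (cylinderUpTo n v ∩ followsFrom n L z) =
      ENNReal.ofReal (pathWeight ω L z) * Q (cylinderUpTo n v) := by
    have hv0 : splice n v z 0 = v 0 := by simp [splice]
    have hnonneg : 0 ≤ pathWeight ω L z := Finset.prod_nonneg fun k _ => (ω (z k)).nonneg _
    rw [cylinderUpTo_inter_followsFrom hvz, measure_cylinderUpTo hQ, measure_cylinderUpTo hQ,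
      hv0, pathWeight_splice hvz, ← ENNReal.ofReal_mul hnonneg]
    ring_nf
  rw [← sdiff_self_inter, measure_sdiff inter_subset_left, hfollow, ENNReal.sub_mul, one_mul]
  · exact fun _ _ => measure_ne_top Q _
  · rw [cylinderUpTo_inter_followsFrom hvz]
    exact (measurableSet_cylinderUpTo _ _).nullMeasurableSet
  · exact measure_ne_top Q _

lemma IsDeterminedUpTo.measure_diff_followsFrom_le (hQ : IsQuenchedRW ω Q)
    {S : Set (PathSpace d)} (hS : IsDeterminedUpTo n S) (hz : ∀ w ∈ S, w n = z 0) :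
    Q (S \ followsFrom n L z) ≤ (1 - ENNReal.ofReal (pathWeight ω L z)) * Q S :=
  hS.measure_inter_le fun w hw => (measure_cylinderUpTo_diff_followsFrom hQ (hz w hw)).le

end PathWeight

section Admissible

variable {ω : EnvOmega d} {Q : Measure (PathSpace d)}

def IsAdmissible (ω : EnvOmega d) (w : PathSpace d) : Prop :=
  ∀ t, 0 < (ω (w t)).prob (w (t + 1) - w t)

lemma ae_isAdmissible (hQ : IsQuenchedRW ω Q) : ∀ᵐ w ∂Q, IsAdmissible ω w := by
  refine ae_all_iff.2 fun t => ae_iff.2 ?_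
  have hS : IsDeterminedUpTo (t + 1) {w : PathSpace d | ¬0 < (ω (w t)).prob (w (t + 1) - w t)} :=
    fun w hw w' hw' hpos => hw (by rwa [hw' t (by omega), hw' (t + 1) le_rfl] at hpos)
  simpa using hS.measure_inter_le (Q := Q) (A := univ) (c := 0) fun w hw => by
    have hstep : (ω (w t)).prob (w (t + 1) - w t) = 0 :=
      le_antisymm (not_lt.1 hw) ((ω (w t)).nonneg _)
    have hweight : pathWeight ω (t + 1) w = 0 :=
      Finset.prod_eq_zero (Finset.mem_range.2 t.lt_succ_self) hstep
    rw [inter_univ, measure_cylinderUpTo hQ, hweight, mul_zero, ENNReal.ofReal_zero, zero_mul]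

lemma IsAdmissible.reaches {w : PathSpace d} (hw : IsAdmissible ω w) {s t : ℕ} (hst : s ≤ t) :
    Reaches ω (w s) (w t) := by
  induction t, hst using Nat.le_induction with
  | base => exact .refl
  | succ t _ ih => exact ih.tail (hw t)

lemma exists_pathWeight_pos_of_reaches {x y : Site d} (h : Reaches ω x y) :
    ∃ (L : ℕ) (z : PathSpace d), z 0 = x ∧ z L = y ∧ 0 < pathWeight ω L z := by
  induction h with
  | refl => exact ⟨0, fun _ => x, rfl, rfl, by simp [pathWeight]⟩
  | @tail b c _ hbc ih =>
    obtain ⟨L, z, hz0, hzL, hpos⟩ := ih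
    let z' : PathSpace d := fun t => if t ≤ L then z t else c
    have hweight : pathWeight ω L z' = pathWeight ω L z :=
      pathWeight_congr fun t ht => if_pos ht
    refine ⟨L + 1, z', by simp [z', hz0], by simp [z'], ?_⟩
    rw [pathWeight, Finset.prod_range_succ, ← pathWeight, hweight]
    simpa [z', hzL] using mul_pos hpos hbc

end Admissible

section RecurrentSet

variable {ω : EnvOmega d} {w : PathSpace d} {x : Site d}

def recurrentSet (w : PathSpace d) : Set (Site d) := {x | {n | w n = x}.Infinite}

lemma IsAdmissible.reaches_of_mem_recurrentSet (hw : IsAdmissible ω w) {s : ℕ} {y : Site d}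
    (hy : y ∈ recurrentSet w) : Reaches ω (w s) y := by
  obtain ⟨t, hty, hst⟩ := hy.exists_gt s
  exact hty ▸ hw.reaches hst.le

lemma recurrentSet_eq_clusterC (hw : IsAdmissible ω w)
    (hclosed : ∀ x y, Reaches ω x y → x ∈ recurrentSet w → y ∈ recurrentSet w)
    (hx : x ∈ recurrentSet w) : recurrentSet w = clusterC ω x := by
  obtain ⟨s, hs⟩ := hx.nonempty
  refine subset_antisymm (fun y hy => ?_) fun y hy => hclosed x y hy hx
  exact (hs : w s = x) ▸ hw.reaches_of_mem_recurrentSet hy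

lemma clusterM_eq_clusterC (hw : IsAdmissible ω w)
    (hclosed : ∀ x y, Reaches ω x y → x ∈ recurrentSet w → y ∈ recurrentSet w)
    (hx : x ∈ recurrentSet w) : clusterM ω x = clusterC ω x := by
  refine subset_antisymm (fun _ hy => hy.1) fun y hy => ⟨hy, ?_⟩
  obtain ⟨s, hs⟩ := (hclosed x y hy hx).nonempty
  exact (hs : w s = y) ▸ hw.reaches_of_mem_recurrentSet hx

end RecurrentSet

section SpacedVisits

variable {x : Site d} {m L : ℕ} {w w' : PathSpace d}

def IsNextVisit (x : Site d) (w : PathSpace d) (b n : ℕ) : Prop :=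
  b ≤ n ∧ w n = x ∧ ∀ t, b ≤ t → t < n → w t ≠ x

def IsSpacedVisit (x : Site d) (m L : ℕ) (w : PathSpace d) : ℕ → ℕ → Prop
  | 0, n => IsNextVisit x w m n
  | k + 1, n => ∃ n', IsSpacedVisit x m L w k n' ∧ IsNextVisit x w (n' + L) n

lemma IsNextVisit.unique {b n n' : ℕ} (h : IsNextVisit x w b n) (h' : IsNextVisit x w b n') :
    n = n' := by
  by_contra hne
  rcases Nat.lt_or_gt_of_ne hne with hlt | hlt
  · exact h'.2.2 n h.1 hlt h.2.1
  · exact h.2.2 n' h'.1 hlt h'.2.1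

lemma IsNextVisit.congr {b n : ℕ} (h : IsNextVisit x w b n) (hww' : ∀ t ≤ n, w t = w' t) :
    IsNextVisit x w' b n :=
  ⟨h.1, hww' n le_rfl ▸ h.2.1, fun t hbt htn => hww' t htn.le ▸ h.2.2 t hbt htn⟩

lemma exists_isNextVisit (hx : {t | w t = x}.Infinite) (b : ℕ) : ∃ n, IsNextVisit x w b n := by
  have hex : ∃ t, b ≤ t ∧ w t = x := by
    obtain ⟨t, ht, hbt⟩ := hx.exists_gt b
    exact ⟨t, hbt.le, ht⟩
  exact ⟨Nat.find hex, (Nat.find_spec hex).1, (Nat.find_spec hex).2,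
    fun t hbt htn hwt => Nat.find_min hex htn ⟨hbt, hwt⟩⟩

namespace IsSpacedVisit

lemma le : ∀ {k n : ℕ}, IsSpacedVisit x m L w k n → m ≤ n
  | 0, _, h => h.1
  | _ + 1, _, ⟨_, h, hnext⟩ => h.le.trans ((Nat.le_add_right _ _).trans hnext.1)

lemma apply_eq : ∀ {k n : ℕ}, IsSpacedVisit x m L w k n → w n = x
  | 0, _, h => h.2.1
  | _ + 1, _, ⟨_, _, hnext⟩ => hnext.2.1

lemma congr : ∀ {k n : ℕ}, IsSpacedVisit x m L w k n → (∀ t ≤ n, w t = w' t) →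
    IsSpacedVisit x m L w' k n
  | 0, _, h, hww' => IsNextVisit.congr h hww'
  | _ + 1, _, ⟨n', h, hnext⟩, hww' =>
    ⟨n', h.congr fun t ht => hww' t (ht.trans ((Nat.le_add_right _ _).trans hnext.1)),
      hnext.congr hww'⟩

lemma unique :
    ∀ {k n n' : ℕ}, IsSpacedVisit x m L w k n → IsSpacedVisit x m L w k n' → n = n'
  | 0, _, _, h, h' => IsNextVisit.unique h h'
  | _ + 1, _, _, ⟨_, h, hnext⟩, ⟨_, h', hnext'⟩ => by
    obtain rfl := h.unique h'
    exact hnext.unique hnext'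

end IsSpacedVisit

lemma exists_isSpacedVisit (hx : {t | w t = x}.Infinite) : ∀ k, ∃ n, IsSpacedVisit x m L w k n
  | 0 => exists_isNextVisit hx m
  | k + 1 => by
    obtain ⟨n', hn'⟩ := exists_isSpacedVisit hx k
    obtain ⟨n, hn⟩ := exists_isNextVisit hx (n' + L)
    exact ⟨n, n', hn', hn⟩

end SpacedVisits

section Recurrence

variable {ω : EnvOmega d} {Q : Measure (PathSpace d)} {x y : Site d} {m L : ℕ} {z : PathSpace d}

def spacedVisitAvoiding (x y : Site d) (m L k n : ℕ) : Set (PathSpace d) :=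
  {w | IsSpacedVisit x m L w k n ∧ ∀ t, m ≤ t → t ≤ n → w t ≠ y}

lemma isDeterminedUpTo_spacedVisitAvoiding (k n : ℕ) :
    IsDeterminedUpTo n (spacedVisitAvoiding x y m L k n) := fun w hw w' hw' =>
  ⟨hw.1.congr fun t ht => (hw' t ht).symm,
    fun t hmt htn => by rw [hw' t htn]; exact hw.2 t hmt htn⟩

lemma pairwise_disjoint_spacedVisitAvoiding (k : ℕ) :
    Pairwise fun n n' =>
      Disjoint (spacedVisitAvoiding x y m L k n) (spacedVisitAvoiding x y m L k n') :=
  fun _ _ hne => disjoint_left.2 fun _ hw hw' => hne (hw.1.unique hw'.1)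

lemma subset_iUnion_spacedVisitAvoiding (k : ℕ) :
    {w : PathSpace d | {t | w t = x}.Infinite ∧ ∀ t, m ≤ t → w t ≠ y} ⊆
      ⋃ n, spacedVisitAvoiding x y m L k n := by
  rintro w ⟨hx, hy⟩
  obtain ⟨n, hn⟩ := exists_isSpacedVisit (m := m) (L := L) hx k
  exact mem_iUnion.2 ⟨n, hn, fun t hmt _ => hy t hmt⟩

lemma iUnion_spacedVisitAvoiding_succ_subset (hzL : z L = y) (k : ℕ) :
    ⋃ n, spacedVisitAvoiding x y m L (k + 1) n ⊆
      ⋃ n, spacedVisitAvoiding x y m L k n \ followsFrom n L z := by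
  refine iUnion_subset fun _ w ⟨⟨n, hk, hnext⟩, hy⟩ =>
    mem_iUnion.2 ⟨n, ⟨hk, ?_⟩, fun hz => ?_⟩
  · exact fun t hmt htn => hy t hmt (htn.trans ((Nat.le_add_right _ _).trans hnext.1))
  · exact hy (n + L) (hk.le.trans (Nat.le_add_right _ _)) hnext.1 (by rw [hz L le_rfl, hzL])

lemma measure_iUnion_spacedVisitAvoiding_succ_le (hQ : IsQuenchedRW ω Q) (hz0 : z 0 = x)
    (hzL : z L = y) (k : ℕ) :
    Q (⋃ n, spacedVisitAvoiding x y m L (k + 1) n) ≤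
      (1 - ENNReal.ofReal (pathWeight ω L z)) * Q (⋃ n, spacedVisitAvoiding x y m L k n) :=
  calc Q (⋃ n, spacedVisitAvoiding x y m L (k + 1) n)
      ≤ Q (⋃ n, spacedVisitAvoiding x y m L k n \ followsFrom n L z) :=
        measure_mono (iUnion_spacedVisitAvoiding_succ_subset hzL k)
    _ ≤ ∑' n, Q (spacedVisitAvoiding x y m L k n \ followsFrom n L z) := measure_iUnion_le _
    _ ≤ ∑' n, (1 - ENNReal.ofReal (pathWeight ω L z)) * Q (spacedVisitAvoiding x y m L k n) :=
        ENNReal.tsum_le_tsum fun n =>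
          (isDeterminedUpTo_spacedVisitAvoiding k n).measure_diff_followsFrom_le hQ
            fun _ hw => hw.1.apply_eq.trans hz0.symm
    _ = (1 - ENNReal.ofReal (pathWeight ω L z)) * Q (⋃ n, spacedVisitAvoiding x y m L k n) := by
        rw [ENNReal.tsum_mul_left, measure_iUnion (pairwise_disjoint_spacedVisitAvoiding k)
          fun n => (isDeterminedUpTo_spacedVisitAvoiding k n).measurableSet]

lemma measure_infinite_visits_avoiding_eq_zero (hQ : IsQuenchedRW ω Q) (hxy : Reaches ω x y)
    (m : ℕ) :
    Q {w : PathSpace d | {t | w t = x}.Infinite ∧ ∀ t, m ≤ t → w t ≠ y} = 0 := by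
  have := hQ.1
  obtain ⟨L, z, hz0, hzL, hpos⟩ := exists_pathWeight_pos_of_reaches hxy
  set c := 1 - ENNReal.ofReal (pathWeight ω L z)
  have hc : c < 1 :=
    ENNReal.sub_lt_self ENNReal.one_ne_top one_ne_zero (ENNReal.ofReal_pos.2 hpos).ne'
  have hpow : ∀ k, Q (⋃ n, spacedVisitAvoiding x y m L k n) ≤ c ^ k := by
    intro k
    induction k with
    | zero => simpa using prob_le_one
    | succ k ih =>
      calc Q (⋃ n, spacedVisitAvoiding x y m L (k + 1) n)
          ≤ c * Q (⋃ n, spacedVisitAvoiding x y m L k n) :=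
            measure_iUnion_spacedVisitAvoiding_succ_le hQ hz0 hzL k
        _ ≤ c * c ^ k := by gcongr
        _ = c ^ (k + 1) := (pow_succ' c k).symm
  refine nonpos_iff_eq_zero.1 <| ge_of_tendsto' (ENNReal.tendsto_pow_atTop_nhds_zero_of_lt_one hc)
    fun k => (measure_mono (subset_iUnion_spacedVisitAvoiding k)).trans (hpow k)

lemma ae_mem_recurrentSet_of_reaches (hQ : IsQuenchedRW ω Q) :
    ∀ᵐ w ∂Q, ∀ x y, Reaches ω x y → x ∈ recurrentSet w → y ∈ recurrentSet w := by
  refine ae_all_iff.2 fun x => ae_all_iff.2 fun y => eventually_imp_distrib_left.2 fun hxy => ?_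
  have hnull : ∀ᵐ w ∂Q, ∀ m, ¬({t | w t = x}.Infinite ∧ ∀ t, m ≤ t → w t ≠ y) :=
    ae_all_iff.2 fun m =>
      measure_eq_zero_iff_ae_notMem.1 (measure_infinite_visits_avoiding_eq_zero hQ hxy m)
  filter_upwards [hnull] with w hw hx
  by_contra hy
  obtain ⟨M, hM⟩ := (not_infinite.1 hy).bddAbove
  exact hw (M + 1) ⟨hx, fun t ht hty => by have := hM hty; omega⟩

end Recurrence

end RWRE

theorem stmt7_general {d : ℕ} (ω : EnvOmega d)
    (hC : ∀ y : Site d, (clusterC ω y).Infinite)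
    (Minf : Set (Site d))
    (hM3 : ∀ x : Site d, (clusterM ω x).Infinite → clusterM ω x = Minf)
    (Q : Measure (PathSpace d)) (hQ : IsQuenchedRW ω Q) :
    Q {w : PathSpace d |
        {x : Site d | {n : ℕ | w n = x}.Infinite} = ∅ ∨
        {x : Site d | {n : ℕ | w n = x}.Infinite} = Minf} = 1 := by
  have := hQ.1
  refine (measure_congr (ae_eq_univ.2 (ae_iff.1 ?_))).trans measure_univ
  filter_upwards [RWRE.ae_isAdmissible hQ, RWRE.ae_mem_recurrentSet_of_reaches hQ]
    with w hw hclosed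
  change RWRE.recurrentSet w = ∅ ∨ RWRE.recurrentSet w = Minf
  refine (eq_empty_or_nonempty _).imp id fun ⟨x, hx⟩ => ?_
  have hMC := RWRE.clusterM_eq_clusterC hw hclosed hx
  rw [RWRE.recurrentSet_eq_clusterC hw hclosed hx, ← hMC, hM3 x (hMC ▸ hC x)]

/-- for a fixed environment with all `C_y` infinite and a unique infinite
mutually connected cluster `M∞`, `ℙ_ω`-a.s. the recurrent set is `∅` or `M∞`. -/
theorem stmt7 {d : ℕ} (hd : 2 ≤ d) (ω : EnvOmega d)
    (hC : ∀ y : Site d, (clusterC ω y).Infinite)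
    (Minf : Set (Site d)) (hM1 : Minf.Infinite) (hM2 : ∃ x : Site d, clusterM ω x = Minf)
    (hM3 : ∀ x : Site d, (clusterM ω x).Infinite → clusterM ω x = Minf)
    (Q : Measure (PathSpace d)) (hQ : IsQuenchedRW ω Q) :
    Q {w : PathSpace d |
        {x : Site d | {n : ℕ | w n = x}.Infinite} = ∅ ∨
        {x : Site d | {n : ℕ | w n = x}.Infinite} = Minf} = 1 :=
  stmt7_general ω hC Minf hM3 Q hQ
end

section
/- For any 2-valued environment in dimension d = 2, the deterministic velocity v = lim_{n→∞} n^{-1}X_n (which exists P-almost surely and is constant) satisfies (v^{[2]} − u_2^{[2]})(u_1^{[1]} − u_2^{[1]}) = (v^{[1]} − u_2^{[1]})(u_1^{[2]} − u_2^{[2]}). -/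
open MeasureTheory Filter Set Topology
open scoped Classical ENNReal

/-!
Take `w` orthogonal to `u₁ - u₂`, so that both local drifts have the same component
`c = ⟪u₁, w⟫ = ⟪u₂, w⟫` along `w`. Since almost every site carries `γ¹` or `γ²`, the process
`Mₙ = ⟪Xₙ, w⟫ - n c` is a martingale under almost every quenched law, with bounded increments,
so `E[Mₙ²] ≤ B n` also under the annealed law. Chebyshev gives `P(|Mₙ| ≥ t n) ≤ B / (t² n) → 0`,
which is incompatible with `Mₙ / n → ⟪v, w⟫ - c` almost surely unless `⟪v, w⟫ = c`; for this
`w` that is the claimed identity.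

The annealed law is only known on cylinders, so expectations are computed as finite sums over the
nearest-neighbour paths of length `N`, encoded by their step sequences `Fin N → Fin d × Bool`:
their cylinders are disjoint and carry full mass.
-/

open Matrix

lemma Fin.sum_pi_eq_sum_sum_snoc {α M : Type*} [Fintype α] [AddCommMonoid M] {N : ℕ}
    (f : (Fin (N + 1) → α) → M) :
    ∑ ε, f ε = ∑ ε : Fin N → α, ∑ e, f (Fin.snoc ε e) := by
  rw [← (Fin.snocEquiv fun _ => α).sum_comp, Fintype.sum_prod_type, Finset.sum_comm]
  rfl

lemma MeasureTheory.measure_setOf_eventually_mem_eq_zero {α : Type*} [MeasurableSpace α]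
    {μ : Measure α} {s : ℕ → Set α} (h : Tendsto (fun n => μ (s n)) atTop (𝓝 0)) :
    μ {x | ∀ᶠ n in atTop, x ∈ s n} = 0 := by
  simp only [eventually_atTop, Set.ofPred_exists, Set.ofPred_forall]
  exact measure_iUnion_null fun N => nonpos_iff_eq_zero.mp <| ge_of_tendsto h <|
    eventually_atTop.mpr ⟨N, fun n hn => measure_mono (Set.iInter₂_subset n hn)⟩

variable {d : ℕ}

lemma stepVec_injective : Function.Injective (stepVec d) := by
  rintro ⟨i, b⟩ ⟨j, b'⟩ h
  have hi := congrFun h i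
  by_cases hij : j = i
  · subst hij
    cases b <;> cases b' <;> first | rfl | simp [stepVec] at hi
  · cases b <;> cases b' <;> simp [stepVec, hij] at hi

namespace EnvDist

lemma prob_le_one_s15 (γ : EnvDist d) (v : Site d) : γ.prob v ≤ 1 := by
  by_cases h : γ.prob v = 0
  · simp [h]
  obtain ⟨i, rfl⟩ := γ.support v h
  rw [← γ.total]
  exact Finset.single_le_sum (fun j _ => γ.nonneg _) (Finset.mem_univ i)

lemma prob_injective : Function.Injective (EnvDist.prob (d := d)) := by
  rintro ⟨⟩ ⟨⟩ h
  simpa using h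

lemma measurable_prob : Measurable (EnvDist.prob (d := d)) :=
  measurable_iff_comap_le.mpr le_rfl

instance : MeasurableSingletonClass (EnvDist d) where
  measurableSet_singleton γ := by
    rw [← prob_injective.preimage_image {γ}, Set.image_singleton]
    exact measurable_prob (measurableSet_singleton _)

lemma drift_dotProduct_eq_sum (γ : EnvDist d) (w : Fin d → ℝ) :
    drift γ ⬝ᵥ w = ∑ e, γ.prob (stepVec d e) * dotR (stepVec d e) w := by
  simp only [dotProduct, drift, dotR, Finset.sum_mul, Finset.mul_sum]
  rw [Finset.sum_comm]
  simp only [mul_assoc]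

lemma sum_prob_mul_add_sq_le (γ : EnvDist d) {w : Fin d → ℝ} {c B : ℝ}
    (hγ : drift γ ⬝ᵥ w = c) (hB : ∀ e, (dotR (stepVec d e) w - c) ^ 2 ≤ B) (m : ℝ) :
    ∑ e, γ.prob (stepVec d e) * (m + (dotR (stepVec d e) w - c)) ^ 2 ≤ m ^ 2 + B := by
  have hmean : ∑ e, γ.prob (stepVec d e) * (dotR (stepVec d e) w - c) = 0 := by
    simp only [mul_sub, Finset.sum_sub_distrib, ← Finset.sum_mul, γ.total,
      ← drift_dotProduct_eq_sum, hγ, one_mul, sub_self]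
  have hvar : ∑ e, γ.prob (stepVec d e) * (dotR (stepVec d e) w - c) ^ 2 ≤ B := by
    calc _ ≤ ∑ e, γ.prob (stepVec d e) * B :=
          Finset.sum_le_sum fun e _ => mul_le_mul_of_nonneg_left (hB e) (γ.nonneg _)
      _ = B := by rw [← Finset.sum_mul, γ.total, one_mul]
  calc _ = m ^ 2 * ∑ e, γ.prob (stepVec d e)
        + 2 * m * ∑ e, γ.prob (stepVec d e) * (dotR (stepVec d e) w - c)
        + ∑ e, γ.prob (stepVec d e) * (dotR (stepVec d e) w - c) ^ 2 := by
        simp only [Finset.mul_sum, ← Finset.sum_add_distrib]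
        exact Finset.sum_congr rfl fun e _ => by ring
    _ ≤ m ^ 2 + B := by rw [γ.total, hmean]; linarith

end EnvDist

def stepPath {N : ℕ} (ε : Fin N → Fin d × Bool) : ℕ → Site d
  | 0 => 0
  | k + 1 => stepPath ε k + if h : k < N then stepVec d (ε ⟨k, h⟩) else 0

section StepPath

variable {N : ℕ} (ε : Fin N → Fin d × Bool) (e : Fin d × Bool)

lemma stepPath_snoc_of_le {k : ℕ} (hk : k ≤ N) :
    stepPath (Fin.snoc ε e : Fin (N + 1) → _) k = stepPath ε k := by
  induction k with
  | zero => rfl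
  | succ k ih =>
    have hkN : k < N := hk
    simp only [stepPath, ih hkN.le, dif_pos hkN, dif_pos (hkN.trans (Nat.lt_succ_self N))]
    exact congrArg _ (congrArg _ (Fin.snoc_castSucc (i := ⟨k, hkN⟩) ..))

lemma stepPath_snoc_succ :
    stepPath (Fin.snoc ε e : Fin (N + 1) → _) (N + 1) = stepPath ε N + stepVec d e := by
  simp only [stepPath, stepPath_snoc_of_le ε e le_rfl, dif_pos (Nat.lt_succ_self N)]
  exact congrArg _ (congrArg _ (Fin.snoc_last (n := N) ..))

lemma pathWeight_stepPath_snoc (ω : EnvOmega d) :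
    pathWeight ω (N + 1) (stepPath (Fin.snoc ε e : Fin (N + 1) → _)) =
      pathWeight ω N (stepPath ε) * (ω (stepPath ε N)).prob (stepVec d e) := by
  rw [pathWeight, Finset.prod_range_succ, stepPath_snoc_succ, stepPath_snoc_of_le ε e le_rfl,
    add_sub_cancel_left]
  congr 1
  refine Finset.prod_congr rfl fun k hk => ?_
  have hk : k < N := Finset.mem_range.mp hk
  rw [stepPath_snoc_of_le ε e hk.le, stepPath_snoc_of_le ε e hk]

lemma stepPath_succ_sub {N : ℕ} (ε : Fin N → Fin d × Bool) {k : ℕ} (hk : k < N) :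
    stepPath ε (k + 1) - stepPath ε k = stepVec d (ε ⟨k, hk⟩) := by
  simp [stepPath, hk]

end StepPath

lemma pathWeight_nonneg (ω : EnvOmega d) (N : ℕ) (x : ℕ → Site d) : 0 ≤ pathWeight ω N x :=
  Finset.prod_nonneg fun _ _ => (ω _).nonneg _

lemma pathWeight_le_one (ω : EnvOmega d) (N : ℕ) (x : ℕ → Site d) : pathWeight ω N x ≤ 1 :=
  Finset.prod_le_one (fun _ _ => (ω _).nonneg _) fun _ _ => (ω _).prob_le_one_s15 _

lemma measurable_pathWeight (N : ℕ) (x : ℕ → Site d) :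
    Measurable fun ω : EnvOmega d => pathWeight ω N x :=
  Finset.measurable_prod _ fun k _ =>
    (measurable_pi_apply _).comp (EnvDist.measurable_prob.comp (measurable_pi_apply (x k)))

lemma integrable_pathWeight (ν : Measure (EnvOmega d)) [IsFiniteMeasure ν] (N : ℕ)
    (x : ℕ → Site d) : Integrable (fun ω => pathWeight ω N x) ν :=
  (integrable_const 1).mono' (measurable_pathWeight N x).aestronglyMeasurable
    (ae_of_all _ fun ω => by
      rw [Real.norm_eq_abs, abs_of_nonneg (pathWeight_nonneg ω N x)]
      exact pathWeight_le_one ω N x)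

section Quenched

variable (ω : EnvOmega d)

lemma sum_pathWeight_stepPath (N : ℕ) :
    ∑ ε : Fin N → Fin d × Bool, pathWeight ω N (stepPath ε) = 1 := by
  induction N with
  | zero => simp [pathWeight]
  | succ N ih =>
    simp only [Fin.sum_pi_eq_sum_sum_snoc, pathWeight_stepPath_snoc, ← Finset.mul_sum,
      (ω _).total, mul_one, ih]

lemma sum_pathWeight_mul_sq_le {w : Fin d → ℝ} {c B : ℝ} (hω : ∀ x, drift (ω x) ⬝ᵥ w = c)
    (hB : ∀ e, (dotR (stepVec d e) w - c) ^ 2 ≤ B) (N : ℕ) :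
    ∑ ε : Fin N → Fin d × Bool,
      pathWeight ω N (stepPath ε) * (dotR (stepPath ε N) w - N * c) ^ 2 ≤ N * B := by
  induction N with
  | zero => simp [stepPath, dotR]
  | succ N ih =>
    have hstep (ε : Fin N → Fin d × Bool) (e : Fin d × Bool) :
        dotR (stepPath (Fin.snoc ε e : Fin (N + 1) → _) (N + 1)) w - (N + 1 : ℕ) * c =
          (dotR (stepPath ε N) w - N * c) + (dotR (stepVec d e) w - c) := by
      simp only [stepPath_snoc_succ, dotR, Pi.add_apply, Int.cast_add, add_mul,
        Finset.sum_add_distrib]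
      push_cast
      ring
    calc _ = ∑ ε : Fin N → Fin d × Bool, pathWeight ω N (stepPath ε) *
          ∑ e, (ω (stepPath ε N)).prob (stepVec d e) *
            ((dotR (stepPath ε N) w - N * c) + (dotR (stepVec d e) w - c)) ^ 2 := by
          simp only [Fin.sum_pi_eq_sum_sum_snoc, pathWeight_stepPath_snoc, hstep, Finset.mul_sum,
            mul_assoc]
      _ ≤ ∑ ε : Fin N → Fin d × Bool, pathWeight ω N (stepPath ε) *
          ((dotR (stepPath ε N) w - N * c) ^ 2 + B) :=
          Finset.sum_le_sum fun ε _ => mul_le_mul_of_nonneg_left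
            ((ω _).sum_prob_mul_add_sq_le (hω _) hB _)
            (pathWeight_nonneg ω N _)
      _ ≤ (N + 1 : ℕ) * B := by
          simp only [mul_add, Finset.sum_add_distrib, ← Finset.sum_mul,
            sum_pathWeight_stepPath, one_mul]
          push_cast
          linarith

end Quenched

def pathCylinder (N : ℕ) (x : ℕ → Site d) : Set (RWSpace d) := {q | ∀ k ≤ N, q.2 k = x k}

lemma measurableSet_pathCylinder (N : ℕ) (x : ℕ → Site d) :
    MeasurableSet (pathCylinder N x) := by
  simp only [pathCylinder, Set.ofPred_forall]
  exact .iInter fun k => .iInter fun _ =>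
    measurableSet_eq_fun ((measurable_pi_apply k).comp measurable_snd) measurable_const

lemma pairwise_disjoint_pathCylinder_stepPath (N : ℕ) :
    Pairwise (Function.onFun Disjoint
      fun ε : Fin N → Fin d × Bool => pathCylinder N (stepPath ε)) := by
  intro ε ε' hne
  refine Set.disjoint_left.mpr fun q hq hq' => hne (funext fun k => stepVec_injective ?_)
  rw [← stepPath_succ_sub ε k.2, ← stepPath_succ_sub ε' k.2, ← hq k.1 k.2.le, ← hq' k.1 k.2.le,
    ← hq (k.1 + 1) k.2, ← hq' (k.1 + 1) k.2]

namespace IsRWRE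

variable {μ : Measure (EnvDist d)} {P : Measure (RWSpace d)} (hP : IsRWRE μ P)
include hP

lemma measure_pathCylinder_stepPath {N : ℕ} (ε : Fin N → Fin d × Bool) :
    P (pathCylinder N (stepPath ε)) =
      ENNReal.ofReal (∫ ω, pathWeight ω N (stepPath ε) ∂P.map Prod.fst) := by
  have : IsProbabilityMeasure P := hP.1
  have hcyl := hP.2.2 N (stepPath ε) Set.univ MeasurableSet.univ
  simp only [Set.mem_univ, true_and, Measure.restrict_univ, stepPath, if_true, one_mul] at hcyl
  rw [← hcyl, ENNReal.ofReal_toReal (measure_ne_top P _)]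
  rfl

lemma measure_compl_iUnion_pathCylinder (N : ℕ) :
    P (⋃ ε : Fin N → Fin d × Bool, pathCylinder N (stepPath ε))ᶜ = 0 := by
  have : IsProbabilityMeasure P := hP.1
  have : IsProbabilityMeasure (P.map Prod.fst) := hP.2.1.2.1
  have hmass : P (⋃ ε : Fin N → Fin d × Bool, pathCylinder N (stepPath ε)) = 1 := by
    rw [measure_iUnion (pairwise_disjoint_pathCylinder_stepPath N)
      (fun ε => measurableSet_pathCylinder N _), tsum_fintype]
    simp only [hP.measure_pathCylinder_stepPath]
    rw [← ENNReal.ofReal_sum_of_nonneg fun ε _ => integral_nonneg fun ω => pathWeight_nonneg ω N _,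
      ← integral_finsetSum _ fun ε _ => integrable_pathWeight _ N _]
    simp [sum_pathWeight_stepPath]
  rw [measure_compl (.iUnion fun ε => measurableSet_pathCylinder N _) (measure_ne_top P _),
    hmass, measure_univ, tsub_self]

variable {w : Fin d → ℝ} {c B : ℝ} (hω : ∀ᵐ ω ∂P.map Prod.fst, ∀ x, drift (ω x) ⬝ᵥ w = c)
  (hB : ∀ e, (dotR (stepVec d e) w - c) ^ 2 ≤ B)
include hω hB

lemma sum_integral_pathWeight_mul_sq_le (N : ℕ) :
    ∑ ε : Fin N → Fin d × Bool, (∫ ω, pathWeight ω N (stepPath ε) ∂P.map Prod.fst) *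
      (dotR (stepPath ε N) w - N * c) ^ 2 ≤ N * B := by
  have : IsProbabilityMeasure (P.map Prod.fst) := hP.2.1.2.1
  simp_rw [← integral_mul_const]
  rw [← integral_finsetSum _ fun ε _ => (integrable_pathWeight _ N _).mul_const _]
  calc _ ≤ ∫ _, (N * B : ℝ) ∂P.map Prod.fst :=
        integral_mono_ae (integrable_finsetSum _ fun ε _ =>
          (integrable_pathWeight _ N _).mul_const _) (integrable_const _)
          (hω.mono fun ω hω => sum_pathWeight_mul_sq_le ω hω hB N)
    _ = N * B := by simp only [integral_const, probReal_univ, smul_eq_mul, one_mul]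

lemma measure_le_abs_dotR_sub_le (N : ℕ) {t : ℝ} (ht : 0 < t) :
    P {q | t ≤ |dotR (q.2 N) w - N * c|} ≤ ENNReal.ofReal (N * B / t ^ 2) := by
  set m : (Fin N → Fin d × Bool) → ℝ := fun ε => dotR (stepPath ε N) w - N * c
  set r : (Fin N → Fin d × Bool) → ℝ :=
    fun ε => ∫ ω, pathWeight ω N (stepPath ε) ∂P.map Prod.fst
  set F := Finset.univ.filter fun ε => t ≤ |m ε|
  have hr (ε) : 0 ≤ r ε := integral_nonneg fun ω => pathWeight_nonneg ω N _
  have hsub : {q : RWSpace d | t ≤ |dotR (q.2 N) w - N * c|} ⊆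
      (⋃ ε ∈ F, pathCylinder N (stepPath ε)) ∪
        (⋃ ε : Fin N → Fin d × Bool, pathCylinder N (stepPath ε))ᶜ := by
    intro q hq
    by_cases h : q ∈ ⋃ ε : Fin N → Fin d × Bool, pathCylinder N (stepPath ε)
    · obtain ⟨ε, hε⟩ := Set.mem_iUnion.mp h
      refine Or.inl (Set.mem_biUnion (Finset.mem_filter.mpr ⟨Finset.mem_univ ε, ?_⟩) hε)
      simpa [m, ← hε N le_rfl] using hq
    · exact Or.inr h
  have hchebyshev : ∑ ε ∈ F, r ε ≤ N * B / t ^ 2 := by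
    calc ∑ ε ∈ F, r ε ≤ ∑ ε ∈ F, r ε * (m ε ^ 2 / t ^ 2) := by
          refine Finset.sum_le_sum fun ε hε => le_mul_of_one_le_right (hr ε) ?_
          rw [one_le_div (by positivity), ← sq_abs (m ε)]
          exact pow_le_pow_left₀ ht.le (Finset.mem_filter.mp hε).2 2
      _ ≤ ∑ ε, r ε * (m ε ^ 2 / t ^ 2) :=
          Finset.sum_le_sum_of_subset_of_nonneg (Finset.subset_univ F)
            fun ε _ _ => mul_nonneg (hr ε) (by positivity)
      _ = (∑ ε, r ε * m ε ^ 2) / t ^ 2 := by simp only [mul_div_assoc', Finset.sum_div]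
      _ ≤ N * B / t ^ 2 := by
          gcongr
          exact hP.sum_integral_pathWeight_mul_sq_le hω hB N
  calc _ ≤ P (⋃ ε ∈ F, pathCylinder N (stepPath ε)) +
        P (⋃ ε : Fin N → Fin d × Bool, pathCylinder N (stepPath ε))ᶜ :=
        (measure_mono hsub).trans (measure_union_le _ _)
    _ ≤ ∑ ε ∈ F, ENNReal.ofReal (r ε) := by
        rw [hP.measure_compl_iUnion_pathCylinder, add_zero]
        exact (measure_biUnion_finset_le F _).trans_eq
          (Finset.sum_congr rfl fun ε _ => hP.measure_pathCylinder_stepPath ε)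
    _ ≤ ENNReal.ofReal (N * B / t ^ 2) := by
        rw [← ENNReal.ofReal_sum_of_nonneg fun ε _ => hr ε]
        exact ENNReal.ofReal_le_ofReal hchebyshev

end IsRWRE

lemma IsIIDEnv.ae_forall_apply {μ : Measure (EnvDist d)} {ν : Measure (EnvOmega d)}
    (h : IsIIDEnv μ ν) {p : EnvDist d → Prop} (hp : ∀ᵐ γ ∂μ, p γ) : ∀ᵐ ω ∂ν, ∀ x, p (ω x) := by
  obtain ⟨S, hpS, hS, hS0⟩ := exists_measurable_superset_of_null (ae_iff.mp hp)
  have hS_at (x : Site d) : ν {ω | ∀ y ∈ ({x} : Finset (Site d)), ω y ∈ S} = 0 := by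
    rw [h.2.2 {x} (fun _ => S) fun _ _ => hS, Finset.prod_singleton, hS0]
  exact ae_all_iff.mpr fun x => ae_iff.mpr <|
    measure_mono_null (fun ω hω => by simpa using hpS hω) (hS_at x)

lemma tendsto_dotR_sub_div {x : ℕ → Site d} {v : Fin d → ℝ} (w : Fin d → ℝ) (c : ℝ)
    (hx : Tendsto (fun n : ℕ => (n : ℝ)⁻¹ • (fun i => ((x n i : ℤ) : ℝ))) atTop (𝓝 v)) :
    Tendsto (fun n : ℕ => (dotR (x n) w - n * c) / n) atTop (𝓝 (v ⬝ᵥ w - c)) := by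
  have hdot : Tendsto (fun n : ℕ => ((n : ℝ)⁻¹ • fun i => ((x n i : ℤ) : ℝ)) ⬝ᵥ w) atTop
      (𝓝 (v ⬝ᵥ w)) :=
    ((continuous_id.dotProduct continuous_const).tendsto v).comp hx
  refine (hdot.sub_const c).congr' (eventually_ne_atTop 0 |>.mono fun n hn => ?_)
  simp only [dotR, dotProduct, Pi.smul_apply, smul_eq_mul]
  rw [sub_div, mul_div_cancel_left₀ c (Nat.cast_ne_zero.mpr hn), Finset.sum_div]
  simp only [inv_mul_eq_div, div_mul_eq_mul_div]

lemma IsRWRE.tendsto_measure_mul_le_abs_dotR_sub {μ : Measure (EnvDist d)}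
    {P : Measure (RWSpace d)} (hP : IsRWRE μ P) {w : Fin d → ℝ} {c : ℝ}
    (hω : ∀ᵐ ω ∂P.map Prod.fst, ∀ x, drift (ω x) ⬝ᵥ w = c) {t : ℝ} (ht : 0 < t) :
    Tendsto (fun n : ℕ => P {q | t * n ≤ |dotR (q.2 n) w - n * c|}) atTop (𝓝 0) := by
  set B := ∑ e, (dotR (stepVec d e) w - c) ^ 2
  have hB (e) : (dotR (stepVec d e) w - c) ^ 2 ≤ B :=
    Finset.single_le_sum (f := fun e => (dotR (stepVec d e) w - c) ^ 2)
      (fun _ _ => sq_nonneg _) (Finset.mem_univ e)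
  have hlim := ENNReal.tendsto_ofReal (tendsto_const_div_atTop_nhds_zero_nat (B / t ^ 2))
  rw [ENNReal.ofReal_zero] at hlim
  refine tendsto_of_tendsto_of_tendsto_of_le_of_le' tendsto_const_nhds hlim
    (.of_forall fun _ => zero_le) (eventually_ge_atTop 1 |>.mono fun n hn => ?_)
  have hn : (0 : ℝ) < n := by exact_mod_cast hn
  refine (hP.measure_le_abs_dotR_sub_le hω hB n (by positivity)).trans_eq
    (congrArg ENNReal.ofReal ?_)
  field_simp

theorem IsRWRE.velocity_dotProduct_eq {μ : Measure (EnvDist d)} {P : Measure (RWSpace d)}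
    (hP : IsRWRE μ P) {v w : Fin d → ℝ} {c : ℝ}
    (hv : P {q : RWSpace d |
      Tendsto (fun n : ℕ => (n : ℝ)⁻¹ • (fun i => ((q.2 n i : ℤ) : ℝ))) atTop (𝓝 v)} = 1)
    (hμ : ∀ᵐ γ ∂μ, drift γ ⬝ᵥ w = c) : v ⬝ᵥ w = c := by
  by_contra hne
  have hδ : 0 < |v ⬝ᵥ w - c| := abs_pos.mpr (sub_ne_zero.mpr hne)
  have hsub : {q : RWSpace d |
      Tendsto (fun n : ℕ => (n : ℝ)⁻¹ • (fun i => ((q.2 n i : ℤ) : ℝ))) atTop (𝓝 v)} ⊆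
        {q | ∀ᶠ n : ℕ in atTop, |v ⬝ᵥ w - c| / 2 * n ≤ |dotR (q.2 n) w - n * c|} := by
    intro q hq
    filter_upwards [(tendsto_dotR_sub_div w c hq).abs.eventually (lt_mem_nhds (half_lt_self hδ)),
      eventually_gt_atTop 0] with n hn hn0
    rw [abs_div, Nat.abs_cast, lt_div_iff₀ (by exact_mod_cast hn0)] at hn
    exact hn.le
  have hnull := measure_setOf_eventually_mem_eq_zero
    (hP.tendsto_measure_mul_le_abs_dotR_sub (hP.2.1.ae_forall_apply hμ) (half_pos hδ))
  exact one_ne_zero <| nonpos_iff_eq_zero.mp <| hv ▸ (measure_mono hsub).trans_eq hnull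

/-- for a 2-valued environment in dimension 2, the deterministic velocity
`v` satisfies `(v⁽²⁾ - u₂⁽²⁾)(u₁⁽¹⁾ - u₂⁽¹⁾) = (v⁽¹⁾ - u₂⁽¹⁾)(u₁⁽²⁾ - u₂⁽²⁾)`. -/
theorem stmt15 (γ1 γ2 : EnvDist 2) (hγ : γ1 ≠ γ2) (p : ℝ) (hp : p ∈ Set.Ioo (0 : ℝ) 1)
    (μ : Measure (EnvDist 2))
    (hμ1 : μ {γ1} = ENNReal.ofReal p) (hμ2 : μ {γ2} = ENNReal.ofReal (1 - p))
    (P : Measure (RWSpace 2)) (hP : IsRWRE μ P)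
    (v : Fin 2 → ℝ)
    (hv : P {q : RWSpace 2 |
        Tendsto (fun n : ℕ => (n : ℝ)⁻¹ • (fun i => ((q.2 n i : ℤ) : ℝ))) atTop (𝓝 v)} = 1) :
    (v 1 - drift γ2 1) * (drift γ1 0 - drift γ2 0) =
      (v 0 - drift γ2 0) * (drift γ1 1 - drift γ2 1) := by
  have : IsProbabilityMeasure μ := hP.2.1.1
  have hpair : μ {γ1, γ2} = μ Set.univ := by
    rw [Set.insert_eq, measure_union (Set.disjoint_singleton.mpr hγ) (measurableSet_singleton _),
      hμ1, hμ2, ← ENNReal.ofReal_add hp.1.le (by linarith [hp.2]), add_sub_cancel, measure_univ,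
      ENNReal.ofReal_one]
  have hμ : ∀ᵐ γ ∂μ, γ = γ1 ∨ γ = γ2 :=
    (ae_iff_measure_eq (by measurability)).mpr hpair
  set w : Fin 2 → ℝ := ![drift γ2 1 - drift γ1 1, drift γ1 0 - drift γ2 0]
  have hdrift : ∀ᵐ γ ∂μ, drift γ ⬝ᵥ w = drift γ2 ⬝ᵥ w := hμ.mono fun γ hγ => by
    rcases hγ with rfl | rfl
    · simp only [w, dotProduct, Fin.sum_univ_two, cons_val_zero, cons_val_one]
      ring
    · rfl
  have hvw := hP.velocity_dotProduct_eq hv hdrift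
  simp only [w, dotProduct, Fin.sum_univ_two, cons_val_zero, cons_val_one] at hvw
  linear_combination hvw
end

section
/- Consider the uniform RWRE on Z^2 in which μ(G_o = {e_2, e_1}) = p and μ(G_o = {e_2, −e_1}) = 1−p for p ∈ (0,1) (so at each site the walk steps up or right each with probability 1/2, or up or left each with probability 1/2). Then P-almost surely lim_{n→∞} n^{-1}X_n = (v^{[1]}, v^{[2]}) with v^{[1]} = (2p−1)(p²−p+6) / (6(2−p)(1+p)) and v^{[2]} = 1/2. -/
open MeasureTheory Filter Set Topology
open scoped Classical ENNReal

/-!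
The walk never steps down, so after an up step it never returns to the row it left. Under the
annealed law the environment therefore enters only through the sites of the current row that the
walk has already left horizontally: the direction in which it left such a site reveals its
environment, and all other sites are fresh. Within a row this information is summarised by one of
five states (`RowState`), so the annealed step sequence is a Markov chain on these states
(`measure_cylinder`). Its vertical steps are i.i.d. with mean `1/2`; for the horizontal coordinate
an explicit solution of the Poisson equation (`horizontalCorrector`) writes `X_n - n v` as a
martingale plus a bounded term. In both cases `X_n - n v` has second moment `O(n)`, so Chebyshev
and Borel–Cantelli give `X_n / n → v` along the squares, and monotonicity of `X_n + n` fills the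
gaps.
-/

noncomputable section
namespace UniformRWRE

open Finset

/-! ### Markov chains driven by words -/

section WordChain

variable {L S : Type*} (tr : S → L → S) (s₀ : S) (κ : S → L → ℝ)

def stateSeq (g : ℕ → L) : ℕ → S
  | 0 => s₀
  | n + 1 => tr (stateSeq g n) (g n)

variable {tr s₀} in
lemma stateSeq_update_of_le (g : ℕ → L) {n k : ℕ} (ℓ : L) (hk : k ≤ n) :
    stateSeq tr s₀ (Function.update g n ℓ) k = stateSeq tr s₀ g k := by
  induction k with
  | zero => rfl
  | succ k ih =>
    simp only [stateSeq, ih (by omega), Function.update_of_ne (by omega : k ≠ n)]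

@[to_additive]
lemma prod_range_succ_update {M : Type*} [CommMonoid M] (F : S → L → M) (g : ℕ → L)
    (n : ℕ) (ℓ : L) :
    ∏ k ∈ range (n + 1), F (stateSeq tr s₀ (Function.update g n ℓ) k) (Function.update g n ℓ k) =
      (∏ k ∈ range n, F (stateSeq tr s₀ g k) (g k)) * F (stateSeq tr s₀ g n) ℓ := by
  rw [prod_range_succ, stateSeq_update_of_le g ℓ le_rfl, Function.update_self]
  congr 1
  refine prod_congr rfl fun k hk => ?_
  have hk : k < n := mem_range.mp hk
  rw [stateSeq_update_of_le g ℓ hk.le, Function.update_of_ne hk.ne]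

def wordWeight (g : ℕ → L) (n : ℕ) : ℝ := ∏ k ∈ range n, κ (stateSeq tr s₀ g k) (g k)

lemma sum_fin_succ_pi [Fintype L] {M : Type*} [AddCommMonoid M] {n : ℕ}
    (F : (Fin (n + 1) → L) → M) : ∑ w, F w = ∑ w : Fin n → L, ∑ ℓ, F (Fin.snoc w ℓ) := by
  rw [← Fintype.sum_equiv (Fin.snocEquiv fun _ => L) (fun z => F (Fin.snoc z.2 z.1)) F
    fun _ => rfl, Fintype.sum_prod_type, Finset.sum_comm]

variable {κ} in
lemma wordWeight_nonneg (hκ : ∀ s ℓ, 0 ≤ κ s ℓ) (g : ℕ → L) (n : ℕ) :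
    0 ≤ wordWeight tr s₀ κ g n :=
  prod_nonneg fun _ _ => hκ _ _

variable [Inhabited L]

def padWord {n : ℕ} (w : Fin n → L) : ℕ → L := fun k => if h : k < n then w ⟨k, h⟩ else default

lemma padWord_snoc {n : ℕ} (w : Fin n → L) (ℓ : L) :
    padWord (Fin.snoc w ℓ : Fin (n + 1) → L) = Function.update (padWord w) n ℓ := by
  funext k
  rcases lt_trichotomy k n with hk | rfl | hk
  · have : (⟨k, by omega⟩ : Fin (n + 1)) = Fin.castSucc ⟨k, hk⟩ := rfl
    simp only [padWord, dif_pos hk, dif_pos (hk.trans (Nat.lt_succ_self n)), this,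
      Fin.snoc_castSucc, Function.update_of_ne hk.ne]
  · simp [padWord, show (⟨k, _⟩ : Fin (k + 1)) = Fin.last k from rfl]
  · simp [padWord, hk.ne', show ¬ k < n + 1 by omega, show ¬ k < n by omega]

variable [Fintype L]

def wordExpect (n : ℕ) (F : (ℕ → L) → ℝ) : ℝ :=
  ∑ w : Fin n → L, wordWeight tr s₀ κ (padWord w) n * F (padWord w)

lemma wordExpect_succ (n : ℕ) (F : (ℕ → L) → ℝ) :
    wordExpect tr s₀ κ (n + 1) F = wordExpect tr s₀ κ n
      fun g => ∑ ℓ, κ (stateSeq tr s₀ g n) ℓ * F (Function.update g n ℓ) := by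
  simp only [wordExpect, sum_fin_succ_pi, padWord_snoc, wordWeight, prod_range_succ_update,
    mul_sum]
  exact sum_congr rfl fun w _ => sum_congr rfl fun ℓ _ => by ring

lemma wordExpect_const_mul (n : ℕ) (c : ℝ) (F : (ℕ → L) → ℝ) :
    wordExpect tr s₀ κ n (fun g => c * F g) = c * wordExpect tr s₀ κ n F := by
  simp only [wordExpect, mul_sum]
  exact sum_congr rfl fun _ _ => by ring

variable {κ}

section Kernel

variable (hκ : ∀ s, ∑ ℓ, κ s ℓ = 1)
include hκ

lemma wordExpect_add_const (n : ℕ) (F : (ℕ → L) → ℝ) (c : ℝ) :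
    wordExpect tr s₀ κ n (fun g => F g + c) = wordExpect tr s₀ κ n F + c := by
  induction n generalizing F with
  | zero => simp [wordExpect, wordWeight]
  | succ n ih =>
    simp only [wordExpect_succ, mul_add, sum_add_distrib, ← sum_mul, hκ, one_mul, ih]

lemma wordExpect_const (n : ℕ) (c : ℝ) : wordExpect tr s₀ κ n (fun _ => c) = c := by
  simpa [wordExpect] using wordExpect_add_const tr s₀ hκ n (fun _ => 0) c

end Kernel

lemma wordExpect_mono (hκ : ∀ s ℓ, 0 ≤ κ s ℓ) (n : ℕ) {F G : (ℕ → L) → ℝ}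
    (h : ∀ g, F g ≤ G g) : wordExpect tr s₀ κ n F ≤ wordExpect tr s₀ κ n G :=
  sum_le_sum fun _ _ => mul_le_mul_of_nonneg_left (h _) (wordWeight_nonneg tr s₀ hκ _ _)

variable (hκ₀ : ∀ s ℓ, 0 ≤ κ s ℓ) (hκ : ∀ s, ∑ ℓ, κ s ℓ = 1)
include hκ₀ hκ

lemma wordExpect_sq_sum_le {d : S → L → ℝ} (hd : ∀ s, ∑ ℓ, κ s ℓ * d s ℓ = 0) {C : ℝ}
    (hC : ∀ s ℓ, d s ℓ ^ 2 ≤ C) (n : ℕ) :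
    wordExpect tr s₀ κ n (fun g => (∑ k ∈ range n, d (stateSeq tr s₀ g k) (g k)) ^ 2) ≤ n * C := by
  induction n with
  | zero => simp [wordExpect]
  | succ n ih =>
    have step (g : ℕ → L) :
        ∑ ℓ, κ (stateSeq tr s₀ g n) ℓ *
            (∑ k ∈ range (n + 1), d (stateSeq tr s₀ (Function.update g n ℓ) k)
              (Function.update g n ℓ k)) ^ 2 ≤
          (∑ k ∈ range n, d (stateSeq tr s₀ g k) (g k)) ^ 2 + C := by
      set s := stateSeq tr s₀ g n
      set m := ∑ k ∈ range n, d (stateSeq tr s₀ g k) (g k)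
      calc ∑ ℓ, κ s ℓ * (∑ k ∈ range (n + 1), d (stateSeq tr s₀ (Function.update g n ℓ) k)
              (Function.update g n ℓ k)) ^ 2
          = m ^ 2 * ∑ ℓ, κ s ℓ + 2 * m * ∑ ℓ, κ s ℓ * d s ℓ + ∑ ℓ, κ s ℓ * d s ℓ ^ 2 := by
            simp only [sum_range_succ_update, mul_sum, ← sum_add_distrib]
            exact sum_congr rfl fun ℓ _ => by ring
        _ ≤ m ^ 2 * 1 + 2 * m * 0 + ∑ ℓ, κ s ℓ * C := by
            rw [hκ, hd]
            gcongr with ℓ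
            · exact hκ₀ _ _
            · exact hC _ _
        _ = m ^ 2 + C := by rw [← sum_mul, hκ]; ring
    calc _ ≤ wordExpect tr s₀ κ n
          (fun g => (∑ k ∈ range n, d (stateSeq tr s₀ g k) (g k)) ^ 2 + C) := by
          rw [wordExpect_succ]; exact wordExpect_mono tr s₀ hκ₀ n step
      _ ≤ (n + 1 : ℕ) * C := by
          rw [wordExpect_add_const tr s₀ hκ]; push_cast; linarith

lemma exists_wordExpect_sq_sub_le [Finite S] (y : L → ℝ) (v : ℝ) (h : S → ℝ)
    (hh : ∀ s, ∑ ℓ, κ s ℓ * (y ℓ - v + h (tr s ℓ) - h s) = 0) :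
    ∃ K, ∀ n : ℕ, wordExpect tr s₀ κ n (fun g => (∑ k ∈ range n, y (g k) - n * v) ^ 2) ≤
      K * (n + 1) := by
  have : Nonempty S := ⟨s₀⟩
  set d : S → L → ℝ := fun s ℓ => y ℓ - v + h (tr s ℓ) - h s
  obtain ⟨⟨s₁, ℓ₁⟩, hC⟩ := Finite.exists_max fun x : S × L => d x.1 x.2 ^ 2
  obtain ⟨s₂, hH⟩ := Finite.exists_max fun s => (h s - h s₀) ^ 2
  set C := d s₁ ℓ₁ ^ 2
  set H := (h s₂ - h s₀) ^ 2
  have telescope (g : ℕ → L) (n : ℕ) : ∑ k ∈ range n, y (g k) - n * v =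
      ∑ k ∈ range n, d (stateSeq tr s₀ g k) (g k) - (h (stateSeq tr s₀ g n) - h s₀) := by
    have := sum_range_sub (fun k => h (stateSeq tr s₀ g k)) n
    simp only [d, stateSeq] at this ⊢
    simp only [add_sub_assoc, sum_add_distrib, sum_sub_distrib, this, sum_const, card_range,
      nsmul_eq_mul]
    ring
  refine ⟨2 * C + 2 * H, fun n => ?_⟩
  calc _ ≤ wordExpect tr s₀ κ n
        (fun g => 2 * (∑ k ∈ range n, d (stateSeq tr s₀ g k) (g k)) ^ 2 + 2 * H) := by
        refine wordExpect_mono tr s₀ hκ₀ n fun g => ?_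
        rw [telescope]
        nlinarith [hH (stateSeq tr s₀ g n), sq_nonneg (∑ k ∈ range n, d (stateSeq tr s₀ g k) (g k)
          + (h (stateSeq tr s₀ g n) - h s₀))]
    _ ≤ 2 * (n * C) + 2 * H := by
        rw [wordExpect_add_const tr s₀ hκ, wordExpect_const_mul]
        gcongr
        exact wordExpect_sq_sum_le tr s₀ hκ₀ hκ (d := d) hh (fun s ℓ => hC (s, ℓ)) n
    _ ≤ (2 * C + 2 * H) * (n + 1) := by
        nlinarith [sq_nonneg (d s₁ ℓ₁), sq_nonneg (h s₂ - h s₀), (Nat.cast_nonneg n : (0:ℝ) ≤ n)]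

end WordChain

/-! ### Convergence criteria -/

lemma ae_tendsto_of_tsum_measure_ne_top {Ω : Type*} [MeasurableSpace Ω] {P : Measure Ω}
    {Y : ℕ → Ω → ℝ} {v : ℝ} (h : ∀ ε > 0, ∑' M, P {ω | ε ≤ |Y M ω - v|} ≠ ∞) :
    ∀ᵐ ω ∂P, Tendsto (fun M => Y M ω) atTop (𝓝 v) := by
  have hj : ∀ᵐ ω ∂P, ∀ j : ℕ, ∀ᶠ M in atTop, ω ∉ {ω | 1 / ((j : ℝ) + 1) ≤ |Y M ω - v|} :=
    ae_all_iff.2 fun j => ae_eventually_notMem (h _ Nat.one_div_pos_of_nat)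
  filter_upwards [hj] with ω hω
  refine Metric.tendsto_nhds.2 fun ε hε => ?_
  obtain ⟨j, hj⟩ := exists_nat_one_div_lt hε
  filter_upwards [hω j] with M hM
  rw [Real.dist_eq]
  exact (not_le.1 hM).trans hj

lemma tendsto_div_of_tendsto_div_sq {x : ℕ → ℝ} {v : ℝ} (hx : ∀ n, x n ≤ x (n + 1) + 1)
    (h : Tendsto (fun M => x ((M + 1) ^ 2) / ((M + 1) ^ 2 : ℕ)) atTop (𝓝 v)) :
    Tendsto (fun n => x n / n) atTop (𝓝 v) := by
  have hmono : Monotone fun n => x n + n :=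
    monotone_nat_of_le_succ fun n => by push_cast; linarith [hx n]
  have key := tendsto_div_of_monotone_of_exists_subseq_tendsto_div _ (v + 1) hmono fun a ha => by
    refine ⟨fun M => (M + 1) ^ 2, ?_, ?_, ?_⟩
    -- `(M + 2) ^ 2 ≤ a * (M + 1) ^ 2` as soon as `3 ≤ (a - 1) * (M + 1)`
    · obtain ⟨N, hN⟩ := exists_nat_ge (3 / (a - 1))
      refine eventually_atTop.2 ⟨N, fun M hM => ?_⟩
      have h3 : 3 ≤ (a - 1) * ((M : ℝ) + 1) := by
        rw [div_le_iff₀ (sub_pos.2 ha)] at hN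
        nlinarith [(Nat.cast_le (α := ℝ)).2 hM]
      push_cast
      nlinarith
    · exact tendsto_atTop_mono (fun M => Nat.le_self_pow two_ne_zero (M + 1))
        (tendsto_add_atTop_nat 1)
    · refine (h.add_const 1).congr fun M => ?_
      have : ((M + 1) ^ 2 : ℕ) ≠ (0 : ℝ) := by positivity
      field_simp
  rw [← add_sub_cancel_right v 1]
  refine (key.sub_const 1).congr' (eventually_atTop.2 ⟨1, fun n hn => ?_⟩)
  have : (n : ℝ) ≠ 0 := by positivity
  field_simp
  ring

/-! ### The row automaton -/

inductive Letter | up | right | left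
  deriving DecidableEq, Inhabited

instance : Fintype Letter := ⟨{.up, .right, .left}, fun ℓ => by cases ℓ <;> decide⟩

def Letter.vec : Letter → Site 2
  | .up => stepVec 2 (1, true)
  | .right => stepVec 2 (0, true)
  | .left => stepVec 2 (0, false)

@[simp] lemma Letter.vec_apply_zero (ℓ : Letter) :
    ℓ.vec 0 = match ℓ with | .up => 0 | .right => 1 | .left => -1 := by
  cases ℓ <;> simp [Letter.vec, stepVec]

@[simp] lemma Letter.vec_apply_one (ℓ : Letter) :
    ℓ.vec 1 = match ℓ with | .up => 1 | .right => 0 | .left => 0 := by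
  cases ℓ <;> simp [Letter.vec, stepVec]

@[simp] lemma Letter.vec_left : Letter.left.vec = -Letter.right.vec := by
  simp [Letter.vec, stepVec]

lemma Letter.vec_injective : Function.Injective Letter.vec := by
  intro a b h
  have h0 := congrFun h 0
  have h1 := congrFun h 1
  cases a <;> cases b <;> simp_all

/-- What the walk knows about its current row: `new` right after an up step, `sweepR` (`sweepL`)
if it has only moved right (left) since, `trapR` on a site it left rightwards whose right neighbour
it left leftwards, and `trapL` symmetrically. -/
inductive RowState | new | sweepR | sweepL | trapR | trapL
  deriving DecidableEq

instance : Fintype RowState :=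
  ⟨{.new, .sweepR, .sweepL, .trapR, .trapL}, fun s => by cases s <;> decide⟩

def RowState.next : RowState → Letter → RowState
  | _, .up => .new
  | .new, .right | .sweepR, .right => .sweepR
  | .new, .left | .sweepL, .left => .sweepL
  | .sweepR, .left | .trapR, .left | .trapL, .left => .trapR
  | .sweepL, .right | .trapR, .right | .trapL, .right => .trapL

def RowState.Inv (R L : Finset (Site 2)) (y : Site 2) : RowState → Prop
  | .new => ∀ z ∈ R ∪ L, z 1 < y 1
  | .sweepR => y - Letter.right.vec ∈ R ∧
      ∀ z ∈ R ∪ L, z 1 < y 1 ∨ z ∈ R ∧ z 1 = y 1 ∧ z 0 < y 0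
  | .sweepL => y + Letter.right.vec ∈ L ∧
      ∀ z ∈ R ∪ L, z 1 < y 1 ∨ z ∈ L ∧ z 1 = y 1 ∧ y 0 < z 0
  | .trapR => y ∈ R ∧ y + Letter.right.vec ∈ L ∧ ∀ z ∈ R ∪ L, z 1 ≤ y 1
  | .trapL => y ∈ L ∧ y - Letter.right.vec ∈ R ∧ ∀ z ∈ R ∪ L, z 1 ≤ y 1

lemma RowState.Inv.next {R L : Finset (Site 2)} {y : Site 2} {s : RowState}
    (hs : s.Inv R L y) (ℓ : Letter)
    (hRL : Disjoint (if ℓ = .right then insert y R else R) (if ℓ = .left then insert y L else L)) :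
    (s.next ℓ).Inv (if ℓ = .right then insert y R else R) (if ℓ = .left then insert y L else L)
      (y + ℓ.vec) := by
  cases s <;> cases ℓ <;> simp [RowState.Inv, RowState.next, ← sub_eq_add_neg] at hs hRL ⊢ <;> grind

inductive SiteStatus | fresh | exitedRight | exitedLeft

def SiteStatus.Holds (R L : Finset (Site 2)) (y : Site 2) : SiteStatus → Prop
  | .fresh => y ∉ R ∧ y ∉ L
  | .exitedRight => y ∈ R
  | .exitedLeft => y ∈ L

def RowState.status : RowState → SiteStatus
  | .new | .sweepR | .sweepL => .fresh
  | .trapR => .exitedRight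
  | .trapL => .exitedLeft

lemma RowState.Inv.holds_status {R L : Finset (Site 2)} {y : Site 2} {s : RowState}
    (hs : s.Inv R L y) : s.status.Holds R L y := by
  cases s with
  | new =>
    have : y ∉ R ∪ L := fun h => (hs y h).false
    simpa [RowState.status, SiteStatus.Holds, not_or] using this
  | sweepR =>
    have : y ∉ R ∪ L := fun h => by simpa using hs.2 y h
    simpa [RowState.status, SiteStatus.Holds, not_or] using this
  | sweepL =>
    have : y ∉ R ∪ L := fun h => by simpa using hs.2 y h
    simpa [RowState.status, SiteStatus.Holds, not_or] using this
  | trapR => exact hs.1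
  | trapL => exact hs.1

def stepFactor (p : ℝ) : Letter → SiteStatus → ℝ
  | .up, _ => 1 / 2
  | .right, .fresh => p / 2
  | .right, .exitedRight => 1 / 2
  | .right, .exitedLeft => 0
  | .left, .fresh => (1 - p) / 2
  | .left, .exitedRight => 0
  | .left, .exitedLeft => 1 / 2

def kernel (p : ℝ) (s : RowState) (ℓ : Letter) : ℝ := stepFactor p ℓ s.status

lemma sum_letter (f : Letter → ℝ) : ∑ ℓ, f ℓ = f .up + f .right + f .left := by
  rw [show (univ : Finset Letter) = {.up, .right, .left} from rfl]
  simp [add_assoc]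

lemma kernel_nonneg {p : ℝ} (hp : p ∈ Set.Icc 0 1) (s : RowState) (ℓ : Letter) :
    0 ≤ kernel p s ℓ := by
  have := hp.1; have := hp.2
  cases s <;> cases ℓ <;> simp [kernel, stepFactor, RowState.status] <;> linarith

lemma sum_kernel (p : ℝ) (s : RowState) : ∑ ℓ, kernel p s ℓ = 1 := by
  cases s <;> simp [sum_letter, kernel, stepFactor, RowState.status] <;> ring

/-- `(1/2)^n` times the probability that the environment lets the walk leave the sites of `R`
rightwards and those of `L` leftwards. -/
def recordWeight (p : ℝ) (n : ℕ) (R L : Finset (Site 2)) : ℝ :=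
  if Disjoint R L then (1 / 2) ^ n * p ^ #R * (1 - p) ^ #L else 0

lemma recordWeight_succ (p : ℝ) (n : ℕ) {R L : Finset (Site 2)} {y : Site 2} (ℓ : Letter)
    {σ : SiteStatus} (hσ : Disjoint R L → σ.Holds R L y) :
    recordWeight p (n + 1) (if ℓ = .right then insert y R else R)
        (if ℓ = .left then insert y L else L) =
      recordWeight p n R L * stepFactor p ℓ σ := by
  by_cases hRL : Disjoint R L
  · have := hσ hRL
    cases ℓ <;> cases σ <;> simp_all [recordWeight, stepFactor, SiteStatus.Holds] <;> ring
  · have hRL' : ¬ Disjoint (if ℓ = .right then insert y R else R)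
        (if ℓ = .left then insert y L else L) := fun h => hRL <| h.mono
          (by split_ifs <;> simp) (by split_ifs <;> simp)
    simp [recordWeight, hRL, hRL']

def wordPath (g : ℕ → Letter) (n : ℕ) : Site 2 := ∑ k ∈ range n, (g k).vec

lemma wordPath_succ (g : ℕ → Letter) (n : ℕ) : wordPath g (n + 1) = wordPath g n + (g n).vec :=
  sum_range_succ _ _

lemma wordPath_apply (g : ℕ → Letter) (n : ℕ) (i : Fin 2) :
    ((wordPath g n i : ℤ) : ℝ) = ∑ k ∈ range n, (((g k).vec i : ℤ) : ℝ) := by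
  simp [wordPath, Finset.sum_apply]

def exits (g : ℕ → Letter) (ℓ : Letter) (n : ℕ) : Finset (Site 2) :=
  {k ∈ range n | g k = ℓ}.image (wordPath g)

lemma mem_exits {g : ℕ → Letter} {ℓ : Letter} {n : ℕ} {z : Site 2} :
    z ∈ exits g ℓ n ↔ ∃ k < n, g k = ℓ ∧ wordPath g k = z := by
  simp [exits, and_assoc]

lemma exits_succ (g : ℕ → Letter) (ℓ : Letter) (n : ℕ) :
    exits g ℓ (n + 1) = if g n = ℓ then insert (wordPath g n) (exits g ℓ n) else exits g ℓ n := by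
  split_ifs with h <;> simp [exits, range_add_one, filter_insert, h]

lemma rowState_inv_of_disjoint (g : ℕ → Letter) (n : ℕ)
    (h : Disjoint (exits g .right n) (exits g .left n)) :
    (stateSeq RowState.next .new g n).Inv (exits g .right n) (exits g .left n) (wordPath g n) := by
  induction n with
  | zero => simp [exits, stateSeq, RowState.Inv]
  | succ n ih =>
    simp only [exits_succ, stateSeq, wordPath_succ] at h ⊢
    exact (ih (h.mono (by split_ifs <;> simp) (by split_ifs <;> simp))).next (g n) h

lemma wordWeight_eq_recordWeight (p : ℝ) (g : ℕ → Letter) (n : ℕ) :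
    wordWeight RowState.next .new (kernel p) g n =
      recordWeight p n (exits g .right n) (exits g .left n) := by
  induction n with
  | zero => simp [wordWeight, recordWeight, exits]
  | succ n ih =>
    rw [wordWeight, prod_range_succ, ← wordWeight, ih, exits_succ, exits_succ,
      recordWeight_succ p n (g n) fun h => (rowState_inv_of_disjoint g n h).holds_status, kernel]

/-! ### The environment -/

def envRight : Set (EnvDist 2) :=
  {γ | γ.prob (stepVec 2 (0, true)) = 1 / 2 ∧ γ.prob (stepVec 2 (1, true)) = 1 / 2 ∧
    γ.prob (stepVec 2 (0, false)) = 0 ∧ γ.prob (stepVec 2 (1, false)) = 0}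

def envLeft : Set (EnvDist 2) :=
  {γ | γ.prob (stepVec 2 (0, true)) = 0 ∧ γ.prob (stepVec 2 (1, true)) = 1 / 2 ∧
    γ.prob (stepVec 2 (0, false)) = 1 / 2 ∧ γ.prob (stepVec 2 (1, false)) = 0}

lemma measurableSet_prob_eq {d : ℕ} (v : Site d) (c : ℝ) :
    MeasurableSet {γ : EnvDist d | γ.prob v = c} :=
  (measurable_pi_apply v).comp (comap_measurable EnvDist.prob) (measurableSet_singleton c)

lemma measurableSet_envRight : MeasurableSet envRight :=
  (measurableSet_prob_eq _ _).inter <| (measurableSet_prob_eq _ _).inter <|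
    (measurableSet_prob_eq _ _).inter (measurableSet_prob_eq _ _)

lemma measurableSet_envLeft : MeasurableSet envLeft :=
  (measurableSet_prob_eq _ _).inter <| (measurableSet_prob_eq _ _).inter <|
    (measurableSet_prob_eq _ _).inter (measurableSet_prob_eq _ _)

lemma disjoint_envRight_envLeft : Disjoint envRight envLeft :=
  Set.disjoint_left.2 fun γ hR hL => by
    have h := hR.1.symm.trans hL.1
    norm_num at h

lemma prob_vec_of_mem {γ : EnvDist 2} (hγ : γ ∈ envRight ∪ envLeft) (ℓ : Letter) :
    γ.prob ℓ.vec =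
      if (ℓ = .right → γ ∈ envRight) ∧ (ℓ = .left → γ ∈ envLeft) then 1 / 2 else 0 := by
  rcases hγ with hγ | hγ
  · have hγ' : γ ∉ envLeft := disjoint_envRight_envLeft.notMem_of_mem_left hγ
    obtain ⟨hr, hu, hl, -⟩ := id hγ
    cases ℓ <;> simp [Letter.vec, hγ, hγ', hr, hu, hl]
  · have hγ' : γ ∉ envRight := disjoint_envRight_envLeft.notMem_of_mem_right hγ
    obtain ⟨hr, hu, hl, -⟩ := id hγ
    cases ℓ <;> simp [Letter.vec, hγ, hγ', hr, hu, hl]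

def exitConstraint (R L : Finset (Site 2)) (z : Site 2) : Set (EnvDist 2) :=
  (if z ∈ R then envRight else Set.univ) ∩ (if z ∈ L then envLeft else Set.univ)

def consistentEnvs (R L : Finset (Site 2)) : Set (EnvOmega 2) :=
  {ω | ∀ z ∈ R ∪ L, ω z ∈ exitConstraint R L z}

lemma mem_consistentEnvs {R L : Finset (Site 2)} {ω : EnvOmega 2} :
    ω ∈ consistentEnvs R L ↔ (∀ z ∈ R, ω z ∈ envRight) ∧ ∀ z ∈ L, ω z ∈ envLeft := by
  simp only [consistentEnvs, exitConstraint, Set.mem_ofPred_eq]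
  constructor
  · intro h
    exact ⟨fun z hz => by simpa [hz] using (h z (mem_union_left _ hz)).1,
      fun z hz => by simpa [hz] using (h z (mem_union_right _ hz)).2⟩
  · rintro ⟨hR, hL⟩ z -
    constructor <;> split_ifs with hz <;> simp [hR, hL, hz]

lemma measurableSet_exitConstraint (R L : Finset (Site 2)) (z : Site 2) :
    MeasurableSet (exitConstraint R L z) := by
  unfold exitConstraint
  split_ifs <;> simp [measurableSet_envRight, measurableSet_envLeft, MeasurableSet.inter]

lemma measurableSet_consistentEnvs (R L : Finset (Site 2)) :
    MeasurableSet (consistentEnvs R L) := by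
  simp only [consistentEnvs, Set.ofPred_forall]
  exact Finset.measurableSet_biInter _ fun z _ =>
    measurable_pi_apply z (measurableSet_exitConstraint R L z)

lemma pathWeight_wordPath {ω : EnvOmega 2} (hω : ∀ z, ω z ∈ envRight ∪ envLeft) (g : ℕ → Letter)
    (n : ℕ) : pathWeight ω n (wordPath g) =
      (consistentEnvs (exits g .right n) (exits g .left n)).indicator (fun _ => (1 / 2) ^ n) ω := by
  have hmem : ω ∈ consistentEnvs (exits g .right n) (exits g .left n) ↔
      ∀ k ∈ range n, (g k = .right → ω (wordPath g k) ∈ envRight) ∧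
        (g k = .left → ω (wordPath g k) ∈ envLeft) := by
    simp only [mem_consistentEnvs, mem_exits, Finset.mem_range, forall_and]
    grind
  simp only [pathWeight, wordPath_succ, add_sub_cancel_left, prob_vec_of_mem (hω _), prod_ite_zero,
    prod_const, card_range, Set.indicator_apply, hmem]

section Environment

variable {p : ℝ} {μ : Measure (EnvDist 2)} {ν : Measure (EnvOmega 2)} (hν : IsIIDEnv μ ν)
  (hp : p ∈ Set.Icc 0 1) (hR : μ envRight = ENNReal.ofReal p)
  (hL : μ envLeft = ENNReal.ofReal (1 - p))
include hν hp hR hL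

lemma measureReal_consistentEnvs (R L : Finset (Site 2)) :
    ν.real (consistentEnvs R L) = if Disjoint R L then p ^ #R * (1 - p) ^ #L else 0 := by
  rw [measureReal_def, consistentEnvs,
    hν.2.2 _ _ fun z _ => measurableSet_exitConstraint R L z]
  split_ifs with hRL
  · have hp₁ : 0 ≤ 1 - p := sub_nonneg.2 hp.2
    have hzR : ∀ z ∈ R, μ (exitConstraint R L z) = ENNReal.ofReal p := fun z hz => by
      simp [exitConstraint, hz, disjoint_left.1 hRL hz, hR]
    have hzL : ∀ z ∈ L, μ (exitConstraint R L z) = ENNReal.ofReal (1 - p) := fun z hz => by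
      simp [exitConstraint, hz, disjoint_right.1 hRL hz, hL]
    rw [prod_union hRL, prod_congr rfl hzR, prod_congr rfl hzL]
    simp [ENNReal.toReal_ofReal hp.1, ENNReal.toReal_ofReal hp₁]
  · obtain ⟨z, hzR, hzL⟩ := not_disjoint_iff.1 hRL
    rw [prod_eq_zero (mem_union_left _ hzR)]
    · rfl
    · simp [exitConstraint, hzR, hzL, disjoint_envRight_envLeft.inter_eq]

lemma ae_mem_envRight_union_envLeft : ∀ᵐ ω ∂ν, ∀ z, ω z ∈ envRight ∪ envLeft := by
  have : IsProbabilityMeasure ν := hν.2.1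
  have hμ : μ (envRight ∪ envLeft) = 1 := by
    rw [measure_union disjoint_envRight_envLeft measurableSet_envLeft, hR, hL,
      ← ENNReal.ofReal_add hp.1 (sub_nonneg.2 hp.2)]
    simp
  refine ae_all_iff.2 fun z => ?_
  have hz := hν.2.2 {z} (fun _ => envRight ∪ envLeft) fun _ _ =>
    measurableSet_envRight.union measurableSet_envLeft
  simp only [Finset.mem_singleton, forall_eq, hμ, prod_const_one] at hz
  exact ae_iff.2 <| (prob_compl_eq_zero_iff <| (measurableSet_envRight.union
    measurableSet_envLeft).preimage (measurable_pi_apply z)).2 hz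

lemma integral_pathWeight_wordPath (g : ℕ → Letter) (n : ℕ) :
    ∫ ω, pathWeight ω n (wordPath g) ∂ν =
      recordWeight p n (exits g .right n) (exits g .left n) := by
  rw [integral_congr_ae ((ae_mem_envRight_union_envLeft hν hp hR hL).mono fun ω hω =>
      pathWeight_wordPath hω g n),
    integral_indicator_const _ (measurableSet_consistentEnvs _ _),
    measureReal_consistentEnvs hν hp hR hL, recordWeight]
  split_ifs <;> simp only [smul_eq_mul] <;> ring

end Environment

/-! ### The annealed law -/

def cylinder (g : ℕ → Letter) (n : ℕ) : Set (RWSpace 2) := {q | ∀ k ≤ n, q.2 k = wordPath g k}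

lemma measurableSet_cylinder (g : ℕ → Letter) (n : ℕ) : MeasurableSet (cylinder g n) := by
  simp only [cylinder, Set.ofPred_forall]
  exact MeasurableSet.iInter fun k => MeasurableSet.iInter fun _ =>
    ((measurable_pi_apply k).comp measurable_snd) (measurableSet_singleton _)

lemma pairwise_disjoint_cylinder (n : ℕ) :
    Pairwise fun w w' : Fin n → Letter =>
      Disjoint (cylinder (padWord w) n) (cylinder (padWord w') n) := by
  intro w w' hne
  refine Set.disjoint_left.2 fun q hq hq' => hne (funext fun i => ?_)
  have hpos : ∀ k ≤ n, wordPath (padWord w) k = wordPath (padWord w') k :=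
    fun k hk => (hq k hk).symm.trans (hq' k hk)
  have hstep := hpos (i + 1) i.2
  rw [wordPath_succ, wordPath_succ, hpos i i.2.le, add_right_inj] at hstep
  simpa [padWord] using Letter.vec_injective hstep

section Annealed

variable {p : ℝ} {μ : Measure (EnvDist 2)} {P : Measure (RWSpace 2)}
  (hp : p ∈ Set.Icc 0 1) (hR : μ envRight = ENNReal.ofReal p)
  (hL : μ envLeft = ENNReal.ofReal (1 - p)) (hP : IsRWRE μ P)
include hp hR hL hP

lemma measure_cylinder (g : ℕ → Letter) (n : ℕ) :
    P (cylinder g n) = ENNReal.ofReal (wordWeight RowState.next .new (kernel p) g n) := by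
  have : IsProbabilityMeasure P := hP.1
  have h := hP.2.2 n (wordPath g) Set.univ MeasurableSet.univ
  have h0 : wordPath g 0 = 0 := sum_range_zero _
  simp only [Set.mem_univ, true_and, h0, if_true, one_mul, Measure.restrict_univ] at h
  rw [wordWeight_eq_recordWeight, ← integral_pathWeight_wordPath hP.2.1 hp hR hL, ← h,
    ENNReal.ofReal_toReal (measure_ne_top P _)]
  rfl

lemma measure_iUnion_cylinder (n : ℕ) :
    P (⋃ w : Fin n → Letter, cylinder (padWord w) n) = 1 := by
  rw [measure_iUnion (pairwise_disjoint_cylinder n) fun w => measurableSet_cylinder _ n,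
    tsum_fintype, sum_congr rfl fun w _ => measure_cylinder hp hR hL hP _ n,
    ← ENNReal.ofReal_sum_of_nonneg fun w _ => wordWeight_nonneg _ _ (kernel_nonneg hp) _ n,
    ← ENNReal.ofReal_one]
  congr 1
  simpa [wordExpect] using wordExpect_const RowState.next .new (sum_kernel p) n 1

lemma ae_exists_cylinder : ∀ᵐ q ∂P, ∀ n, ∃ w : Fin n → Letter, q ∈ cylinder (padWord w) n := by
  have : IsProbabilityMeasure P := hP.1
  refine ae_all_iff.2 fun n => ?_
  simpa using (ae_mem_iff_measure_eq (MeasurableSet.iUnion fun w =>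
    measurableSet_cylinder (padWord w) n).nullMeasurableSet).2
    (by rw [measure_iUnion_cylinder hp hR hL hP, measure_univ])

lemma measure_le_wordExpect (φ : Site 2 → ℝ) (hφ : ∀ x, 0 ≤ φ x) (n : ℕ) {c : ℝ} (hc : 0 < c) :
    P {q | c ≤ φ (q.2 n)} ≤ ENNReal.ofReal
      (wordExpect RowState.next .new (kernel p) n (fun g => φ (wordPath g n)) / c) := by
  have : IsProbabilityMeasure P := hP.1
  have hW := wordWeight_nonneg RowState.next .new (kernel_nonneg hp)
  have hcyl (w : Fin n → Letter) : P ({q | c ≤ φ (q.2 n)} ∩ cylinder (padWord w) n) ≤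
      ENNReal.ofReal (wordWeight RowState.next .new (kernel p) (padWord w) n *
        φ (wordPath (padWord w) n) / c) := by
    by_cases hw : c ≤ φ (wordPath (padWord w) n)
    · calc _ ≤ P (cylinder (padWord w) n) := measure_mono Set.inter_subset_right
        _ = _ := measure_cylinder hp hR hL hP _ n
        _ ≤ _ := ENNReal.ofReal_le_ofReal <| by
          rw [le_div_iff₀ hc]; exact mul_le_mul_of_nonneg_left hw (hW _ n)
    · have : {q : RWSpace 2 | c ≤ φ (q.2 n)} ∩ cylinder (padWord w) n = ∅ :=
        Set.eq_empty_of_forall_notMem fun q ⟨hq, hqw⟩ => hw (hqw n le_rfl ▸ hq)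
      simp [this]
  have hG : P (⋃ w : Fin n → Letter, cylinder (padWord w) n)ᶜ = 0 :=
    (prob_compl_eq_zero_iff (MeasurableSet.iUnion fun w => measurableSet_cylinder _ n)).2
      (measure_iUnion_cylinder hp hR hL hP n)
  calc _ = P ({q | c ≤ φ (q.2 n)} ∩ ⋃ w : Fin n → Letter, cylinder (padWord w) n) :=
        (measure_inter_conull hG).symm
    _ ≤ ∑ w : Fin n → Letter, P ({q | c ≤ φ (q.2 n)} ∩ cylinder (padWord w) n) := by
        rw [Set.inter_iUnion]; exact measure_iUnion_fintype_le _ _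
    _ ≤ _ := (sum_le_sum fun w _ => hcyl w).trans_eq <| by
        rw [← ENNReal.ofReal_sum_of_nonneg fun w _ =>
          div_nonneg (mul_nonneg (hW _ n) (hφ _)) hc.le, ← sum_div, wordExpect]

lemma measure_le_of_wordExpect_sq_le (i : Fin 2) (v : ℝ) {K : ℝ} (hK₀ : 0 ≤ K)
    (hK : ∀ n : ℕ, wordExpect RowState.next .new (kernel p) n
      (fun g => (∑ k ∈ range n, (((g k).vec i : ℤ) : ℝ) - n * v) ^ 2) ≤ K * (n + 1))
    {ε : ℝ} (hε : 0 < ε) {N : ℕ} (hN : 0 < N) :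
    P {q | ε ≤ |((q.2 N i : ℤ) : ℝ) / N - v|} ≤ ENNReal.ofReal (2 * K / ε ^ 2 / N) := by
  have hN' : (0 : ℝ) < N := Nat.cast_pos.2 hN
  calc _ ≤ P {q | (ε * N) ^ 2 ≤ (((q.2 N i : ℤ) : ℝ) - N * v) ^ 2} := by
        refine measure_mono fun q hq => ?_
        have : ((q.2 N i : ℤ) : ℝ) - N * v = N * (((q.2 N i : ℤ) : ℝ) / N - v) := by
          field_simp
        have hsq := pow_le_pow_left₀ hε.le hq 2
        rw [sq_abs] at hsq
        rw [Set.mem_ofPred_eq, this, mul_pow, mul_pow, mul_comm (ε ^ 2)]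
        exact mul_le_mul_of_nonneg_left hsq (by positivity)
    _ ≤ ENNReal.ofReal (wordExpect RowState.next .new (kernel p) N
          (fun g => (((wordPath g N i : ℤ) : ℝ) - N * v) ^ 2) / (ε * N) ^ 2) :=
        measure_le_wordExpect hp hR hL hP (fun x => (((x i : ℤ) : ℝ) - N * v) ^ 2)
          (fun _ => sq_nonneg _) N (by positivity)
    _ ≤ ENNReal.ofReal (K * (N + 1) / (ε * N) ^ 2) := by
        gcongr
        simpa only [wordPath_apply] using hK N
    _ ≤ _ := ENNReal.ofReal_le_ofReal <| by
        rw [div_div, div_le_div_iff₀ (by positivity) (by positivity)]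
        have : (N : ℝ) + 1 ≤ 2 * N := by linarith [(Nat.one_le_cast (α := ℝ)).2 hN]
        nlinarith [mul_le_mul_of_nonneg_left this hK₀]

lemma ae_coord_le_succ_add_one (i : Fin 2) :
    ∀ᵐ q ∂P, ∀ n, ((q.2 n i : ℤ) : ℝ) ≤ ((q.2 (n + 1) i : ℤ) : ℝ) + 1 := by
  filter_upwards [ae_exists_cylinder hp hR hL hP] with q hq n
  obtain ⟨w, hw⟩ := hq (n + 1)
  rw [hw n n.le_succ, hw (n + 1) le_rfl, wordPath_succ, Pi.add_apply]
  push_cast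
  have : -1 ≤ (padWord w n).vec i := by
    fin_cases i <;> cases padWord w n <;> simp
  have : (-1 : ℝ) ≤ ((padWord w n).vec i : ℤ) := by exact_mod_cast this
  linarith

lemma ae_tendsto_coord_div (i : Fin 2) (v : ℝ) (h : RowState → ℝ)
    (hh : ∀ s, ∑ ℓ, kernel p s ℓ * (((ℓ.vec i : ℤ) : ℝ) - v + h (s.next ℓ) - h s) = 0) :
    ∀ᵐ q ∂P, Tendsto (fun n : ℕ => ((q.2 n i : ℤ) : ℝ) / n) atTop (𝓝 v) := by
  obtain ⟨K, hK⟩ := exists_wordExpect_sq_sub_le RowState.next .new (kernel_nonneg hp)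
    (sum_kernel p) _ v h hh
  have hK₀ : 0 ≤ K := by simpa [wordExpect] using hK 0
  have hsq : ∀ᵐ q ∂P, Tendsto (fun M => ((q.2 ((M + 1) ^ 2) i : ℤ) : ℝ) / ((M + 1) ^ 2 : ℕ))
      atTop (𝓝 v) := by
    refine ae_tendsto_of_tsum_measure_ne_top fun ε hε => ?_
    have hsum : Summable fun M : ℕ => 2 * K / ε ^ 2 / ((M + 1) ^ 2 : ℕ) := by
      push_cast
      exact ((summable_nat_add_iff 1).2 (Real.summable_one_div_nat_pow.2 one_lt_two)).mul_left
        (2 * K / ε ^ 2) |>.congr fun M => by push_cast; ring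
    refine ne_top_of_le_ne_top (ENNReal.ofReal_tsum_of_nonneg (fun M => by positivity) hsum ▸
      ENNReal.ofReal_ne_top) (ENNReal.tsum_le_tsum fun M =>
        measure_le_of_wordExpect_sq_le hp hR hL hP i v hK₀ hK hε (by positivity))
  filter_upwards [hsq, ae_coord_le_succ_add_one hp hR hL hP i] with q h₁ h₂
  exact tendsto_div_of_tendsto_div_sq h₂ h₁

end Annealed

def horizontalVelocity (p : ℝ) : ℝ := (2 * p - 1) * (p ^ 2 - p + 6) / (6 * (2 - p) * (1 + p))

/-- A solution of the Poisson equation of the chain for the horizontal step. It is solvable because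
`horizontalVelocity p` is the mean horizontal step under the stationary law of the chain. -/
def horizontalCorrector (p : ℝ) : RowState → ℝ
  | .new => 0
  | .sweepR => (5 * p - 2) / (3 * (2 - p)) - 2 * horizontalVelocity p
  | .sweepL => (5 * p - 3) / (3 * (1 + p)) - 2 * horizontalVelocity p
  | .trapR => 1 / 3 - 2 * horizontalVelocity p
  | .trapL => -(1 / 3) - 2 * horizontalVelocity p

lemma horizontalCorrector_poisson {p : ℝ} (hp : p ∈ Set.Icc 0 1) (s : RowState) :
    ∑ ℓ, kernel p s ℓ * (((ℓ.vec 0 : ℤ) : ℝ) - horizontalVelocity p +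
      horizontalCorrector p (s.next ℓ) - horizontalCorrector p s) = 0 := by
  have : 2 - p ≠ 0 := by linarith [hp.2]
  have : 1 + p ≠ 0 := by linarith [hp.1]
  cases s <;> simp [sum_letter, kernel, stepFactor, RowState.status, RowState.next,
    horizontalCorrector, horizontalVelocity] <;> field_simp <;> ring

lemma kernel_mean_vertical (p : ℝ) (s : RowState) :
    ∑ ℓ, kernel p s ℓ * (((ℓ.vec 1 : ℤ) : ℝ) - 1 / 2) = 0 := by
  cases s <;> simp [sum_letter, kernel, stepFactor, RowState.status] <;> ring

end UniformRWRE

end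

/-- the uniform RWRE on `ℤ²` with `G_o = {↑, →}` w.p. `p` and
`G_o = {↑, ←}` w.p. `1-p` has `P`-a.s. velocity
`((2p-1)(p²-p+6)/(6(2-p)(1+p)), 1/2)`. -/
theorem stmt19 (p : ℝ) (hp : p ∈ Set.Ioo (0 : ℝ) 1)
    (μ : Measure (EnvDist 2))
    (hμ1 : μ {γ : EnvDist 2 |
        γ.prob (stepVec 2 (0, true)) = 1 / 2 ∧ γ.prob (stepVec 2 (1, true)) = 1 / 2 ∧
        γ.prob (stepVec 2 (0, false)) = 0 ∧ γ.prob (stepVec 2 (1, false)) = 0} =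
      ENNReal.ofReal p)
    (hμ2 : μ {γ : EnvDist 2 |
        γ.prob (stepVec 2 (0, true)) = 0 ∧ γ.prob (stepVec 2 (1, true)) = 1 / 2 ∧
        γ.prob (stepVec 2 (0, false)) = 1 / 2 ∧ γ.prob (stepVec 2 (1, false)) = 0} =
      ENNReal.ofReal (1 - p))
    (P : Measure (RWSpace 2)) (hP : IsRWRE μ P) :
    P {q : RWSpace 2 |
      Tendsto (fun n : ℕ => (n : ℝ)⁻¹ • (fun i => ((q.2 n i : ℤ) : ℝ))) atTop
        (𝓝 ![(2 * p - 1) * (p ^ 2 - p + 6) / (6 * (2 - p) * (1 + p)), 1 / 2])} = 1 := by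
  have hp' : p ∈ Set.Icc 0 1 := Set.Ioo_subset_Icc_self hp
  have : IsProbabilityMeasure P := hP.1
  have hx := UniformRWRE.ae_tendsto_coord_div hp' hμ1 hμ2 hP 0 _ _
    (UniformRWRE.horizontalCorrector_poisson hp')
  have hy := UniformRWRE.ae_tendsto_coord_div hp' hμ1 hμ2 hP 1 (1 / 2) 0
    fun s => by simpa using UniformRWRE.kernel_mean_vertical p s
  have hxy : ∀ᵐ q ∂P, Tendsto (fun n : ℕ => (n : ℝ)⁻¹ • fun i => ((q.2 n i : ℤ) : ℝ)) atTop
      (𝓝 ![UniformRWRE.horizontalVelocity p, 1 / 2]) := by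
    filter_upwards [hx, hy] with q h₀ h₁
    refine tendsto_pi_nhds.2 fun i => ?_
    fin_cases i
    · simpa [div_eq_inv_mul] using h₀
    · simpa [div_eq_inv_mul] using h₁
  rw [← measure_univ (μ := P)]
  exact measure_congr (ae_eq_univ.2 (ae_iff.1 hxy))
end
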